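/- arXiv:1603.04358 — 7 statements merged into one kernel-verified Lean document; each statement's English description precedes it below -/
import Mathlib

section
/- Let U ⊆ ℂ[z] be a polynomial subspace of finite codimension. For every ζ ∈ ℂ, the dimension of the space Ann_ζ(U) of differential functionals supported at ζ that annihilate U equals ν_ζ, the number of gaps in the order sequence of U at ζ. -/
open Polynomial
open scoped Classical

/-- The order sequence of a polynomial subspace `U` at a point `ζ`. -/
def orderSeq (U : Submodule ℂ (Polynomial ℂ)) (ζ : ℂ) : Set ℕ :=
  {k | ∃ y ∈ U, y ≠ 0 ∧ rootMultiplicity ζ y = k}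

/-- `α` is a differential functional supported at `ζ`. -/
def IsDiffFunctionalAt (ζ : ℂ) (α : Polynomial ℂ →ₗ[ℂ] ℂ) : Prop :=
  ∃ (k : ℕ) (a : ℕ → ℂ), ∀ y : Polynomial ℂ,
    α y = ∑ j ∈ Finset.range (k + 1), a j * (derivative^[j] y).eval ζ
noncomputable def cf (ζ : ℂ) (j : ℕ) : Polynomial ℂ →ₗ[ℂ] ℂ :=
  (lcoeff ℂ j).comp (taylor ζ)

lemma cf_apply (ζ : ℂ) (j : ℕ) (y : Polynomial ℂ) : cf ζ j y = (taylor ζ y).coeff j := rfl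

lemma cf_pow (ζ : ℂ) (j i : ℕ) : cf ζ j ((X - C ζ)^i) = if j = i then 1 else 0 := by
  have h : taylor ζ ((X - C ζ)^i) = X ^ i := by
    rw [taylor_apply, pow_comp, sub_comp, X_comp, C_comp, add_sub_cancel_right]
  rw [cf_apply, h, coeff_X_pow]

lemma deriv_eval_eq (ζ : ℂ) (j : ℕ) (y : Polynomial ℂ) :
    (derivative^[j] y).eval ζ = (j.factorial : ℂ) * cf ζ j y := by
  rw [cf_apply, taylor_coeff, ← factorial_smul_hasseDeriv]
  simp [eval_smul, nsmul_eq_mul]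

lemma le_rootMult_iff (ζ : ℂ) {y : Polynomial ℂ} (hy : y ≠ 0) (n : ℕ) :
    n ≤ rootMultiplicity ζ y ↔ ∀ j < n, cf ζ j y = 0 := by
  rw [le_rootMultiplicity_iff hy]
  constructor
  · rintro ⟨q, hq⟩ j hj
    have : taylor ζ y = X ^ n * taylor ζ q := by
      rw [hq, taylor_mul]
      congr 1
      rw [taylor_apply, pow_comp, sub_comp, X_comp, C_comp, add_sub_cancel_right]
    rw [cf_apply, this]
    have := (X_pow_dvd_iff (f := X ^ n * taylor ζ q) (n := n)).1 ⟨_, rfl⟩ j hj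
    exact this
  · intro h
    have hdvd : X ^ n ∣ taylor ζ y := X_pow_dvd_iff.2 fun d hd => h d hd
    obtain ⟨q, hq⟩ := hdvd
    refine ⟨taylor (-ζ) q, ?_⟩
    have : taylor (-ζ) (taylor ζ y) = y := by
      rw [taylor_taylor, neg_add_cancel, taylor_zero]
    rw [← this, hq, taylor_mul]
    congr 1
    rw [taylor_apply, pow_comp, X_comp, sub_eq_add_neg, map_neg]

lemma rootMult_eq_iff (ζ : ℂ) {y : Polynomial ℂ} (hy : y ≠ 0) (n : ℕ) :
    rootMultiplicity ζ y = n ↔ (∀ j < n, cf ζ j y = 0) ∧ cf ζ n y ≠ 0 := by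
  constructor
  · rintro rfl
    refine ⟨(le_rootMult_iff ζ hy _).1 le_rfl, fun h => ?_⟩
    have : rootMultiplicity ζ y + 1 ≤ rootMultiplicity ζ y := by
      rw [le_rootMult_iff ζ hy]
      intro j hj
      rcases Nat.lt_succ_iff_lt_or_eq.1 hj with h' | h'
      · exact (le_rootMult_iff ζ hy _).1 le_rfl j h'
      · rw [h']; exact h
    omega
  · rintro ⟨h1, h2⟩
    have hle : n ≤ rootMultiplicity ζ y := (le_rootMult_iff ζ hy _).2 h1
    by_contra hne
    have : n + 1 ≤ rootMultiplicity ζ y := by omega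
    exact h2 ((le_rootMult_iff ζ hy _).1 this n (Nat.lt_succ_self n))

lemma mem_orderSeq {U : Submodule ℂ (Polynomial ℂ)} {ζ : ℂ} {n : ℕ} :
    n ∈ orderSeq U ζ ↔ ∃ y ∈ U, (∀ j < n, cf ζ j y = 0) ∧ cf ζ n y ≠ 0 := by
  constructor
  · rintro ⟨y, hyU, hy0, hord⟩
    exact ⟨y, hyU, (rootMult_eq_iff ζ hy0 n).1 hord⟩
  · rintro ⟨y, hyU, h1, h2⟩
    have hy0 : y ≠ 0 := fun h => h2 (by simp [h])
    exact ⟨y, hyU, hy0, (rootMult_eq_iff ζ hy0 n).2 ⟨h1, h2⟩⟩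

-- gaps are bounded
lemma gaps_bounded (U : Submodule ℂ (Polynomial ℂ)) [FiniteDimensional ℂ (Polynomial ℂ ⧸ U)]
    (ζ : ℂ) : ∃ K : ℕ, ∀ n, n ∉ orderSeq U ζ → n ≤ K := by
  set G : Set ℕ := {n | n ∉ orderSeq U ζ} with hG
  have hfin : G.Finite := by
    have hli : LinearIndependent ℂ (fun n : G => Submodule.Quotient.mk (p := U) ((X - C ζ) ^ (n : ℕ))) := by
      rw [linearIndependent_iff']
      intro s g hsum
      by_contra hcon
      push_neg at hcon
      obtain ⟨i0, hi0s, hgi0⟩ := hcon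
      -- y := ∑ g i • (X - C ζ)^i ∈ U
      set y : Polynomial ℂ := ∑ i ∈ s, g i • (X - C ζ) ^ (i : ℕ) with hy
      have hyU : y ∈ U := by
        rw [← Submodule.Quotient.mk_eq_zero]
        have : (Submodule.Quotient.mk y : Polynomial ℂ ⧸ U) = U.mkQ y := rfl
        rw [this, hy, map_sum]
        simpa using hsum
      -- compute cf ζ j y
      have hcf : ∀ j : ℕ, cf ζ j y = ∑ i ∈ s, g i * (if j = (i : ℕ) then 1 else 0) := by
        intro j
        rw [hy, map_sum]
        congr 1; ext i
        rw [LinearMap.map_smul, cf_pow]; rfl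
      -- let n be minimal element of s' := {i ∈ s | g i ≠ 0} (as naturals)
      have hne : (s.filter (fun i => g i ≠ 0)).Nonempty := ⟨i0, Finset.mem_filter.2 ⟨hi0s, hgi0⟩⟩
      set t := (s.filter (fun i => g i ≠ 0)).image (fun i : G => (i : ℕ)) with ht
      have htne : t.Nonempty := hne.image _
      set n := t.min' htne with hn
      have hnmem : n ∈ t := Finset.min'_mem t htne
      obtain ⟨i1, hi1, hi1n⟩ := Finset.mem_image.1 hnmem
      have hi1s : i1 ∈ s := (Finset.mem_filter.1 hi1).1
      have hgi1 : g i1 ≠ 0 := (Finset.mem_filter.1 hi1).2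
      -- cf ζ n y = g i1 ≠ 0
      have hcfn : cf ζ n y = g i1 := by
        rw [hcf]
        rw [Finset.sum_eq_single i1]
        · simp [hi1n]
        · intro i his hii
          by_cases hgi : g i = 0
          · simp [hgi]
          · have : (i : ℕ) ∈ t := Finset.mem_image.2 ⟨i, Finset.mem_filter.2 ⟨his, hgi⟩, rfl⟩
            have : n ≠ (i : ℕ) := by
              intro h
              exact hii (Subtype.ext (h ▸ hi1n).symm ▸ rfl)
            simp [this]
        · intro h; exact absurd hi1s h
      have hcflt : ∀ j < n, cf ζ j y = 0 := by
        intro j hj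
        rw [hcf]
        apply Finset.sum_eq_zero
        intro i his
        by_cases hgi : g i = 0
        · simp [hgi]
        · have hit : (i : ℕ) ∈ t := Finset.mem_image.2 ⟨i, Finset.mem_filter.2 ⟨his, hgi⟩, rfl⟩
          have : n ≤ (i : ℕ) := Finset.min'_le t _ hit
          have : j ≠ (i : ℕ) := by omega
          simp [this]
      -- so n ∈ orderSeq U ζ, but n corresponds to element i1 of G
      have : n ∈ orderSeq U ζ := mem_orderSeq.2 ⟨y, hyU, hcflt, hcfn ▸ hgi1⟩
      have : n ∉ orderSeq U ζ := hi1n ▸ i1.2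
      tauto
    have := hli.finite
    exact G.toFinite
  obtain ⟨K, hK⟩ := hfin.bddAbove
  exact ⟨K, fun n hn => hK hn⟩

noncomputable def tr (ζ : ℂ) (K : ℕ) : Polynomial ℂ →ₗ[ℂ] (Fin (K+1) → ℂ) :=
  LinearMap.pi (fun j => cf ζ (j : ℕ))

lemma tr_apply (ζ : ℂ) (K : ℕ) (y : Polynomial ℂ) (j : Fin (K+1)) :
    tr ζ K y j = cf ζ (j : ℕ) y := rfl

lemma tr_surjective (ζ : ℂ) (K : ℕ) : Function.Surjective (tr ζ K) := by
  intro v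
  refine ⟨∑ j : Fin (K+1), v j • (X - C ζ) ^ (j : ℕ), ?_⟩
  funext i
  rw [tr_apply, map_sum]
  rw [Finset.sum_eq_single i]
  · rw [LinearMap.map_smul, cf_pow]
    simp
  · intro j _ hj
    rw [LinearMap.map_smul, cf_pow]
    have : (i : ℕ) ≠ (j : ℕ) := fun h => hj (Fin.ext h).symm
    simp [this]
  · simp

noncomputable def lowZero (K n : ℕ) : Submodule ℂ (Fin (K+1) → ℂ) where
  carrier := {v | ∀ j : Fin (K+1), (j : ℕ) < n → v j = 0}
  add_mem' := fun ha hb j hj => by simp [ha j hj, hb j hj]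
  zero_mem' := fun j hj => rfl
  smul_mem' := fun c v hv j hj => by simp [hv j hj]

lemma mem_lowZero {K n : ℕ} {v : Fin (K+1) → ℂ} :
    v ∈ lowZero K n ↔ ∀ j : Fin (K+1), (j : ℕ) < n → v j = 0 := Iff.rfl

section chain
variable (U : Submodule ℂ (Polynomial ℂ)) (ζ : ℂ) (K : ℕ)

lemma chain_step [FiniteDimensional ℂ (Polynomial ℂ ⧸ U)] {n : ℕ} (hn : n < K + 1) :
    Module.finrank ℂ ↥(U.map (tr ζ K) ⊓ lowZero K n) =
      Module.finrank ℂ ↥(U.map (tr ζ K) ⊓ lowZero K (n+1)) +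
        (if n ∈ orderSeq U ζ then 1 else 0) := by
  set V := U.map (tr ζ K) with hV
  set W := V ⊓ lowZero K n with hW
  set f : (Fin (K+1) → ℂ) →ₗ[ℂ] ℂ := LinearMap.proj (⟨n, hn⟩ : Fin (K+1)) with hf
  set g := f.domRestrict W with hg
  have hrn := LinearMap.finrank_range_add_finrank_ker g
  -- kernel part
  have hker : LinearMap.ker g = Submodule.comap W.subtype (LinearMap.ker f) :=
    LinearMap.ker_domRestrict W f
  have hker2 : Module.finrank ℂ ↥(LinearMap.ker g) =
      Module.finrank ℂ ↥(V ⊓ lowZero K (n+1)) := by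
    rw [hker]
    rw [← Submodule.finrank_map_subtype_eq W (Submodule.comap W.subtype (LinearMap.ker f))]
    have heq : W ⊓ LinearMap.ker f = V ⊓ lowZero K (n+1) := by
      apply le_antisymm
      · rintro v ⟨⟨hv1, hv2⟩, hv3⟩
        refine ⟨hv1, fun j hj => ?_⟩
        rcases Nat.lt_succ_iff_lt_or_eq.1 hj with h | h
        · exact hv2 j h
        · have : j = (⟨n, hn⟩ : Fin (K+1)) := Fin.ext h
          rw [this]
          exact hv3
      · rintro v ⟨hv1, hv2⟩
        exact ⟨⟨hv1, fun j hj => hv2 j (by omega)⟩, hv2 ⟨n, hn⟩ (Nat.lt_succ_self n)⟩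
    rw [Submodule.map_comap_subtype, heq]
  -- range part
  have hrange : Module.finrank ℂ ↥(LinearMap.range g) =
      (if n ∈ orderSeq U ζ then 1 else 0) := by
    by_cases hmem : n ∈ orderSeq U ζ
    · rw [if_pos hmem]
      obtain ⟨y, hyU, h1, h2⟩ := mem_orderSeq.1 hmem
      have hv : tr ζ K y ∈ W := by
        refine ⟨⟨y, hyU, rfl⟩, fun j hj => ?_⟩
        exact h1 _ hj
      have hne : g ⟨tr ζ K y, hv⟩ ≠ 0 := h2
      have hbot : LinearMap.range g ≠ ⊥ := by
        intro h
        exact hne (by 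
          have := LinearMap.mem_range_self g ⟨tr ζ K y, hv⟩
          rw [h] at this
          simpa using this)
      have h1' : 1 ≤ Module.finrank ℂ ↥(LinearMap.range g) :=
        Nat.one_le_iff_ne_zero.2 (fun h' => hbot (Submodule.finrank_eq_zero.1 h'))
      have h2' : Module.finrank ℂ ↥(LinearMap.range g) ≤ 1 := by
        have := Submodule.finrank_le (LinearMap.range g)
        simpa using this
      omega
    · rw [if_neg hmem]
      have : LinearMap.range g = ⊥ := by
        rw [LinearMap.range_eq_bot]
        ext ⟨v, hv1, hv2⟩
        simp only [LinearMap.zero_apply]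
        by_contra hne
        obtain ⟨y, hyU, hty⟩ := hv1
        apply hmem
        refine mem_orderSeq.2 ⟨y, hyU, fun j hj => ?_, ?_⟩
        · have hjK : j < K + 1 := by omega
          have := hv2 ⟨j, hjK⟩ hj
          rw [← hty] at this
          exact this
        · have : cf ζ n y = v ⟨n, hn⟩ := by rw [← hty]; rfl
          rw [this]
          exact hne
      rw [this]
      simp
  rw [hrange, hker2] at hrn
  rw [← hrn]
  omega

end chain

lemma chain_telescope (U : Submodule ℂ (Polynomial ℂ)) [FiniteDimensional ℂ (Polynomial ℂ ⧸ U)]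
    (ζ : ℂ) (K : ℕ) :
    ∀ d n, n + d = K + 1 →
      Module.finrank ℂ ↥(U.map (tr ζ K) ⊓ lowZero K n) =
        ((Finset.Ico n (K+1)).filter (· ∈ orderSeq U ζ)).card := by
  intro d
  induction d with
  | zero =>
    intro n hn
    have h1 : n = K + 1 := by omega
    subst h1
    have h2 : U.map (tr ζ K) ⊓ lowZero K (K+1) = ⊥ := by
      apply le_antisymm
      · rintro v ⟨_, hv2⟩
        have : v = 0 := funext fun j => hv2 j j.isLt
        simp [this]
      · simp
    rw [h2]
    simp
  | succ d ih =>
    intro n hn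
    have hnK : n < K + 1 := by omega
    rw [chain_step U ζ K hnK, ih (n+1) (by omega)]
    have hsplit : Finset.Ico n (K+1) = insert n (Finset.Ico (n+1) (K+1)) := by
      ext m
      simp [Finset.mem_Ico, Finset.mem_insert]
      omega
    rw [hsplit, Finset.filter_insert]
    by_cases hmem : n ∈ orderSeq U ζ
    · rw [if_pos hmem, if_pos hmem, Finset.card_insert_of_notMem (by simp)]
    · rw [if_neg hmem, if_neg hmem, Nat.add_zero]

lemma finrank_V (U : Submodule ℂ (Polynomial ℂ)) [FiniteDimensional ℂ (Polynomial ℂ ⧸ U)]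
    (ζ : ℂ) (K : ℕ) :
    Module.finrank ℂ ↥(U.map (tr ζ K)) =
      ((Finset.range (K+1)).filter (· ∈ orderSeq U ζ)).card := by
  have h0 : lowZero K 0 = ⊤ := by
    apply le_antisymm le_top
    rintro v -
    intro j hj
    omega
  have := chain_telescope U ζ K (K+1) 0 (by omega)
  rw [h0, inf_top_eq] at this
  rw [this, Finset.range_eq_Ico]

lemma diff_iff (ζ : ℂ) (α : Polynomial ℂ →ₗ[ℂ] ℂ) :
    IsDiffFunctionalAt ζ α ↔ ∃ (k : ℕ) (b : ℕ → ℂ), ∀ y : Polynomial ℂ,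
      α y = ∑ j ∈ Finset.range (k + 1), b j * cf ζ j y := by
  constructor
  · rintro ⟨k, a, ha⟩
    refine ⟨k, fun j => a j * (j.factorial : ℂ), fun y => ?_⟩
    rw [ha y]
    apply Finset.sum_congr rfl
    intro j _
    rw [deriv_eval_eq]
    ring
  · rintro ⟨k, b, hb⟩
    refine ⟨k, fun j => b j / (j.factorial : ℂ), fun y => ?_⟩
    rw [hb y]
    apply Finset.sum_congr rfl
    intro j _
    rw [deriv_eval_eq]
    have : (j.factorial : ℂ) ≠ 0 := Nat.cast_ne_zero.2 j.factorial_ne_zero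
    field_simp

lemma span_eq_map (U : Submodule ℂ (Polynomial ℂ)) [FiniteDimensional ℂ (Polynomial ℂ ⧸ U)]
    (ζ : ℂ) (K : ℕ) (hK : ∀ n, n ∉ orderSeq U ζ → n ≤ K) :
    {α : Polynomial ℂ →ₗ[ℂ] ℂ | IsDiffFunctionalAt ζ α ∧ ∀ y ∈ U, α y = 0} =
      ↑(Submodule.map (tr ζ K).dualMap
        (Submodule.dualAnnihilator (U.map (tr ζ K)))) := by
  ext α
  simp only [Set.mem_setOf_eq, SetLike.mem_coe, Submodule.mem_map]
  constructor
  · rintro ⟨hdiff, hvan⟩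
    obtain ⟨k, b, hb⟩ := (diff_iff ζ α).1 hdiff
    -- high coefficients vanish
    have hzero : ∀ d n, K < n → n ≤ k → k ≤ n + d → b n = 0 := by
      intro d
      induction d with
      | zero =>
        intro n hKn hnk hkn
        have hnI : n ∈ orderSeq U ζ := by
          by_contra h
          exact absurd (hK n h) (by omega)
        obtain ⟨y, hyU, h1, h2⟩ := mem_orderSeq.1 hnI
        have h0 : (0 : ℂ) = ∑ j ∈ Finset.range (k + 1), b j * cf ζ j y := by
          rw [← hb y, hvan y hyU]
        rw [Finset.sum_eq_single n] at h0
        · field_simp at h0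
          exact (mul_eq_zero.1 h0.symm).resolve_right h2
        · intro j hj hjn
          have hj' := Finset.mem_range.1 hj
          have : j < n := by omega
          rw [h1 j this, mul_zero]
        · intro h; exact absurd (Finset.mem_range.2 (by omega)) h
      | succ d ih =>
        intro n hKn hnk hkn
        have hnI : n ∈ orderSeq U ζ := by
          by_contra h
          exact absurd (hK n h) (by omega)
        obtain ⟨y, hyU, h1, h2⟩ := mem_orderSeq.1 hnI
        have h0 : (0 : ℂ) = ∑ j ∈ Finset.range (k + 1), b j * cf ζ j y := by
          rw [← hb y, hvan y hyU]
        rw [Finset.sum_eq_single n] at h0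
        · field_simp at h0
          exact (mul_eq_zero.1 h0.symm).resolve_right h2
        · intro j hj hjn
          have hj' := Finset.mem_range.1 hj
          rcases lt_or_gt_of_ne hjn with h | h
          · rw [h1 j h, mul_zero]
          · rw [ih j (by omega) (by omega) (by omega), zero_mul]
        · intro h; exact absurd (Finset.mem_range.2 (by omega)) h
    have hzero' : ∀ n, K < n → n ≤ k → b n = 0 := fun n h1 h2 => hzero k n h1 h2 (by omega)
    -- padded coefficients
    set b' : ℕ → ℂ := fun j => if j ≤ k then b j else 0 with hb'
    have hb'high : ∀ j, K < j → b' j = 0 := by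
      intro j hj
      by_cases h : j ≤ k
      · simp only [hb', if_pos h]; exact hzero' j hj h
      · simp [hb', h]
    set M := max k K with hM
    have hsum : ∀ y, α y = ∑ j ∈ Finset.range (K + 1), b' j * cf ζ j y := by
      intro y
      have e1 : α y = ∑ j ∈ Finset.range (k + 1), b' j * cf ζ j y := by
        rw [hb y]
        apply Finset.sum_congr rfl
        intro j hj
        have hjk : j ≤ k := Nat.lt_succ_iff.1 (Finset.mem_range.1 hj)
        simp [hb', hjk]
      have e2 : ∑ j ∈ Finset.range (k + 1), b' j * cf ζ j y
          = ∑ j ∈ Finset.range (M + 1), b' j * cf ζ j y := by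
        apply Finset.sum_subset
        · intro j hj
          rw [Finset.mem_range] at *
          omega
        · intro j _ hj
          rw [Finset.mem_range] at hj
          have : ¬ j ≤ k := by omega
          simp [hb', this]
      have e3 : ∑ j ∈ Finset.range (K + 1), b' j * cf ζ j y
          = ∑ j ∈ Finset.range (M + 1), b' j * cf ζ j y := by
        apply Finset.sum_subset
        · intro j hj
          rw [Finset.mem_range] at *
          omega
        · intro j _ hj
          rw [Finset.mem_range] at hj
          rw [hb'high j (by omega), zero_mul]
      rw [e1, e2, ← e3]
    -- build β
    set β : (Fin (K+1) → ℂ) →ₗ[ℂ] ℂ :=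
      ∑ i : Fin (K+1), b' (i : ℕ) • LinearMap.proj i with hβ
    have hβap : ∀ v : Fin (K+1) → ℂ, β v = ∑ i : Fin (K+1), b' (i : ℕ) * v i := by
      intro v
      rw [hβ]
      simp [LinearMap.sum_apply]
    have hβtr : ∀ y, β (tr ζ K y) = α y := by
      intro y
      rw [hβap, hsum y]
      rw [← Fin.sum_univ_eq_sum_range (fun j => b' j * cf ζ j y) (K+1)]
      rfl
    refine ⟨β, ?_, ?_⟩
    · rw [Submodule.mem_dualAnnihilator]
      rintro v ⟨y, hyU, rfl⟩
      rw [hβtr y]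
      exact hvan y hyU
    · apply LinearMap.ext
      intro y
      exact hβtr y
  · rintro ⟨β, hβann, rfl⟩
    constructor
    · -- it is a differential functional
      rw [diff_iff]
      refine ⟨K, fun j => if h : j < K + 1 then
          β (fun j' => if (⟨j, h⟩ : Fin (K+1)) = j' then 1 else 0) else 0,
        fun y => ?_⟩
      have := LinearMap.pi_apply_eq_sum_univ β (tr ζ K y)
      rw [LinearMap.dualMap_apply, this]
      rw [← Fin.sum_univ_eq_sum_range
        (fun j => (if h : j < K + 1 then
          β (fun j' => if (⟨j, h⟩ : Fin (K+1)) = j' then 1 else 0) else 0) * cf ζ j y) (K+1)]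
      apply Finset.sum_congr rfl
      intro i _
      rw [dif_pos i.isLt]
      rw [tr_apply]
      simp [mul_comm, smul_eq_mul]
    · intro y hyU
      rw [LinearMap.dualMap_apply]
      exact (Submodule.mem_dualAnnihilator β).1 hβann _ ⟨y, hyU, rfl⟩

theorem stmt4' (U : Submodule ℂ (Polynomial ℂ)) [FiniteDimensional ℂ (Polynomial ℂ ⧸ U)]
    (ζ : ℂ) :
    Module.finrank ℂ ↥(Submodule.span ℂ {α : Polynomial ℂ →ₗ[ℂ] ℂ |
        IsDiffFunctionalAt ζ α ∧ ∀ y ∈ U, α y = 0}) =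
      Set.ncard {n : ℕ | n ∉ orderSeq U ζ} := by
  obtain ⟨K, hK⟩ := gaps_bounded U ζ
  rw [span_eq_map U ζ K hK, Submodule.span_eq]
  have hinj : Function.Injective (tr ζ K).dualMap :=
    LinearMap.dualMap_injective_of_surjective (tr_surjective ζ K)
  rw [← LinearEquiv.finrank_eq
    (Submodule.equivMapOfInjective (tr ζ K).dualMap hinj
      (Submodule.dualAnnihilator (U.map (tr ζ K))))]
  have h1 := Submodule.finrank_quotient_add_finrank (U.map (tr ζ K))
  have h2 := (Subspace.quotEquivAnnihilator (U.map (tr ζ K))).finrank_eq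
  have h3 : Module.finrank ℂ (Fin (K+1) → ℂ) = K + 1 := by simp
  have h4 := finrank_V U ζ K
  have h5 := Finset.card_filter_add_card_filter_not
    (s := Finset.range (K+1)) (p := (· ∈ orderSeq U ζ))
  have h6 : {n : ℕ | n ∉ orderSeq U ζ} =
      ↑((Finset.range (K+1)).filter (· ∉ orderSeq U ζ)) := by
    ext n
    simp only [Set.mem_setOf_eq, Finset.coe_filter, Finset.mem_range]
    constructor
    · intro h
      exact ⟨by have := hK n h; omega, h⟩
    · rintro ⟨-, h⟩
      exact h
  rw [h6, Set.ncard_coe_finset]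
  have hcard : (Finset.range (K+1)).card = K + 1 := Finset.card_range _
  omega

/-- For a polynomial subspace `U` of finite codimension and any `ζ ∈ ℂ`, the
space `Ann_ζ(U)` of differential functionals supported at `ζ` annihilating `U` has dimension
`ν_ζ`, the number of gaps in the order sequence of `U` at `ζ`.  (The set of such functionals
is a linear subspace, so we may express its dimension via the span.) -/
theorem stmt4 (U : Submodule ℂ (Polynomial ℂ)) [FiniteDimensional ℂ (Polynomial ℂ ⧸ U)]
    (ζ : ℂ) :
    Module.finrank ℂ ↥(Submodule.span ℂ {α : Polynomial ℂ →ₗ[ℂ] ℂ |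
        IsDiffFunctionalAt ζ α ∧ ∀ y ∈ U, α y = 0}) =
      Set.ncard {n : ℕ | n ∉ orderSeq U ζ} := by
  exact stmt4' U ζ
end

section
/- Let U ⊆ ℂ[z] be a polynomial subspace of finite codimension, ζ ∈ ℂ, and suppose ℕ \ I_ζ is nonempty with maximum element n. Then there exists a basis {ỹ_j}_{j ∈ I_ζ} of U such that ord_ζ(ỹ_j) = j and ỹ_j^{(j)}(ζ) = 1 for all j ∈ I_ζ, and ỹ_j^{(i)}(ζ) = 0 whenever i, j ∈ I_ζ with j < i < n. -/
open Polynomial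

/-- The `i`-th derivative evaluated at `ζ`, as a linear functional. -/
noncomputable def Dl (ζ : ℂ) (i : ℕ) : Polynomial ℂ →ₗ[ℂ] ℂ :=
  (Polynomial.leval ζ).comp ((Polynomial.derivative : Polynomial ℂ →ₗ[ℂ] Polynomial ℂ) ^ i)

lemma Dl_apply (ζ : ℂ) (i : ℕ) (p : Polynomial ℂ) :
    Dl ζ i p = (derivative^[i] p).eval ζ := by
  simp [Dl, Module.End.pow_apply]

lemma Dl_eq_zero_of_lt {ζ : ℂ} {p : Polynomial ℂ} {j : ℕ}
    (h : j < rootMultiplicity ζ p) : Dl ζ j p = 0 := by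
  rw [Dl_apply]
  exact isRoot_iterate_derivative_of_lt_rootMultiplicity h

lemma le_rootMultiplicity_of_Dl {ζ : ℂ} {p : Polynomial ℂ} {j : ℕ} (hp : p ≠ 0)
    (h : ∀ i < j, Dl ζ i p = 0) : j ≤ rootMultiplicity ζ p := by
  cases j with
  | zero => exact Nat.zero_le _
  | succ k =>
    refine (lt_rootMultiplicity_iff_isRoot_iterate_derivative hp).2 fun m hm => ?_
    have := h m (Nat.lt_succ_of_le hm)
    rwa [Dl_apply] at this

lemma rootMultiplicity_le_natDeg {ζ : ℂ} {p : Polynomial ℂ} (hp : p ≠ 0) :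
    rootMultiplicity ζ p ≤ natDegree p := by
  have h1 : (X - C ζ) ^ rootMultiplicity ζ p ∣ p := pow_rootMultiplicity_dvd p ζ
  have := Polynomial.natDegree_le_of_dvd h1 hp
  simpa [natDegree_pow] using this

lemma rootMultiplicity_eq_of_Dl {ζ : ℂ} {p : Polynomial ℂ} {j : ℕ}
    (h0 : ∀ i < j, Dl ζ i p = 0) (h1 : Dl ζ j p ≠ 0) :
    p ≠ 0 ∧ rootMultiplicity ζ p = j := by
  have hp : p ≠ 0 := by
    rintro rfl
    exact h1 (map_zero _)
  refine ⟨hp, le_antisymm ?_ (le_rootMultiplicity_of_Dl hp h0)⟩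
  by_contra hlt
  exact h1 (Dl_eq_zero_of_lt (lt_of_not_ge hlt))

open Classical in
/-- Triangular elimination: subtract multiples of later vectors to clear
derivative values at indices in `I` strictly between `j` and `n`. -/
noncomputable def elimSeq (ζ : ℂ) (I : Set ℕ) (n : ℕ) (u : ℕ → Polynomial ℂ) :
    ℕ → Polynomial ℂ
  | j => u j - ∑ i ∈ (Finset.Ioo j n).attach,
      if (i : ℕ) ∈ I then Dl ζ i (u j) • elimSeq ζ I n u i else 0
  termination_by j => n - j
  decreasing_by
    have := Finset.mem_Ioo.mp i.2
    omega

open Classical in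
lemma elimSeq_eq (ζ : ℂ) (I : Set ℕ) (n : ℕ) (u : ℕ → Polynomial ℂ) (j : ℕ) :
    elimSeq ζ I n u j = u j - ∑ i ∈ Finset.Ioo j n,
      if i ∈ I then Dl ζ i (u j) • elimSeq ζ I n u i else 0 := by
  rw [elimSeq]
  congr 1
  exact Finset.sum_attach (Finset.Ioo j n)
    (fun i => if i ∈ I then Dl ζ i (u j) • elimSeq ζ I n u i else 0)

open Classical in
lemma elimSeq_props (ζ : ℂ) (U : Submodule ℂ (Polynomial ℂ)) (I : Set ℕ) (n : ℕ)
    (u : ℕ → Polynomial ℂ)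
    (huU : ∀ j ∈ I, u j ∈ U)
    (hu0 : ∀ j ∈ I, ∀ i < j, Dl ζ i (u j) = 0)
    (hu1 : ∀ j ∈ I, Dl ζ j (u j) = 1) :
    ∀ j ∈ I, elimSeq ζ I n u j ∈ U ∧
      (∀ i < j, Dl ζ i (elimSeq ζ I n u j) = 0) ∧
      Dl ζ j (elimSeq ζ I n u j) = 1 ∧
      (∀ i ∈ I, j < i → i < n → Dl ζ i (elimSeq ζ I n u j) = 0) ∧
      elimSeq ζ I n u j ∈ Submodule.span ℂ (u '' I) := by
  suffices H : ∀ m : ℕ, ∀ j, n - j ≤ m → j ∈ I → elimSeq ζ I n u j ∈ U ∧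
      (∀ i < j, Dl ζ i (elimSeq ζ I n u j) = 0) ∧
      Dl ζ j (elimSeq ζ I n u j) = 1 ∧
      (∀ i ∈ I, j < i → i < n → Dl ζ i (elimSeq ζ I n u j) = 0) ∧
      elimSeq ζ I n u j ∈ Submodule.span ℂ (u '' I) by
    exact fun j hj => H (n - j) j le_rfl hj
  intro m
  induction m using Nat.strong_induction_on with
  | _ m ih =>
    intro j hjm hj
    have IH : ∀ i ∈ Finset.Ioo j n, i ∈ I → elimSeq ζ I n u i ∈ U ∧
        (∀ k < i, Dl ζ k (elimSeq ζ I n u i) = 0) ∧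
        Dl ζ i (elimSeq ζ I n u i) = 1 ∧
        (∀ k ∈ I, i < k → k < n → Dl ζ k (elimSeq ζ I n u i) = 0) ∧
        elimSeq ζ I n u i ∈ Submodule.span ℂ (u '' I) := by
      intro i hi hiI
      have hio := Finset.mem_Ioo.mp hi
      have hm : n - i < m := by omega
      exact ih (n - i) hm i le_rfl hiI
    rw [elimSeq_eq]
    refine ⟨?_, ?_, ?_, ?_, ?_⟩
    · refine Submodule.sub_mem _ (huU j hj) (Submodule.sum_mem _ fun i hi => ?_)
      split_ifs with h
      · exact Submodule.smul_mem _ _ (IH i hi h).1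
      · exact Submodule.zero_mem _
    · intro k hk
      rw [map_sub, map_sum, hu0 j hj k hk, Finset.sum_eq_zero, sub_zero]
      intro i hi
      split_ifs with h
      · rw [map_smul, (IH i hi h).2.1 k (hk.trans (Finset.mem_Ioo.mp hi).1), smul_zero]
      · exact map_zero _
    · rw [map_sub, map_sum, hu1 j hj, Finset.sum_eq_zero, sub_zero]
      intro i hi
      split_ifs with h
      · rw [map_smul, (IH i hi h).2.1 j (Finset.mem_Ioo.mp hi).1, smul_zero]
      · exact map_zero _
    · intro k hkI hjk hkn
      have hkIoo : k ∈ Finset.Ioo j n := Finset.mem_Ioo.mpr ⟨hjk, hkn⟩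
      rw [map_sub, map_sum, Finset.sum_eq_single k]
      · rw [if_pos hkI, map_smul, (IH k hkIoo hkI).2.2.1, smul_eq_mul, mul_one, sub_self]
      · intro i hi hik
        split_ifs with h
        · rw [map_smul]
          rcases lt_or_gt_of_ne hik with hlt | hgt
          · rw [(IH i hi h).2.2.2.1 k hkI hlt hkn, smul_zero]
          · rw [(IH i hi h).2.1 k hgt, smul_zero]
        · exact map_zero _
      · intro h
        exact absurd hkIoo h
    · refine Submodule.sub_mem _ (Submodule.subset_span ⟨j, hj, rfl⟩)
        (Submodule.sum_mem _ fun i hi => ?_)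
      split_ifs with h
      · exact Submodule.smul_mem _ _ (IH i hi h).2.2.2.2
      · exact Submodule.zero_mem _

/-- Spanning: minimal-degree representatives of each order span `U`. -/
lemma span_of_minimal (ζ : ℂ) (U : Submodule ℂ (Polynomial ℂ)) (u : ℕ → Polynomial ℂ)
    (huU : ∀ j ∈ orderSeq U ζ, u j ∈ U)
    (hu0 : ∀ j ∈ orderSeq U ζ, ∀ i < j, Dl ζ i (u j) = 0)
    (hu1 : ∀ j ∈ orderSeq U ζ, Dl ζ j (u j) = 1)
    (humin : ∀ j ∈ orderSeq U ζ, ∀ w ∈ U, w ≠ 0 → rootMultiplicity ζ w = j →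
      natDegree (u j) ≤ natDegree w) :
    ∀ w ∈ U, w ∈ Submodule.span ℂ (u '' orderSeq U ζ) := by
  suffices H : ∀ m : ℕ, ∀ w ∈ U, natDegree w - rootMultiplicity ζ w ≤ m →
      w ∈ Submodule.span ℂ (u '' orderSeq U ζ) by
    exact fun w hw => H (natDegree w) w hw (Nat.sub_le _ _)
  intro m
  induction m using Nat.strong_induction_on with
  | _ m ih =>
    intro w hw hwm
    by_cases hw0 : w = 0
    · rw [hw0]; exact Submodule.zero_mem _
    have hj : rootMultiplicity ζ w ∈ orderSeq U ζ := ⟨w, hw, hw0, rfl⟩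
    set j := rootMultiplicity ζ w with hjdef
    set w' := w - Dl ζ j w • u j with hw'def
    have hspan_uj : u j ∈ Submodule.span ℂ (u '' orderSeq U ζ) :=
      Submodule.subset_span ⟨j, hj, rfl⟩
    by_cases hw'0 : w' = 0
    · have hweq : w = Dl ζ j w • u j := by
        have := sub_eq_zero.mp hw'0
        exact this
      rw [hweq]
      exact Submodule.smul_mem _ _ hspan_uj
    · have hall : ∀ i < j + 1, Dl ζ i w' = 0 := by
        intro i hi
        rw [hw'def, map_sub, map_smul, smul_eq_mul]
        rcases Nat.lt_succ_iff_lt_or_eq.mp hi with hlt | heq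
        · rw [Dl_eq_zero_of_lt (hjdef ▸ hlt), hu0 j hj i hlt, mul_zero, sub_zero]
        · subst heq
          rw [hu1 j hj, mul_one, sub_self]
      have htw' : j + 1 ≤ rootMultiplicity ζ w' := le_rootMultiplicity_of_Dl hw'0 hall
      have hw'U : w' ∈ U := Submodule.sub_mem _ hw (Submodule.smul_mem _ _ (huU j hj))
      have hdeg : natDegree w' ≤ natDegree w := by
        refine (natDegree_sub_le _ _).trans (max_le le_rfl ?_)
        exact (natDegree_smul_le _ _).trans (humin j hj w hw hw0 rfl)
      have htle : rootMultiplicity ζ w' ≤ natDegree w' := rootMultiplicity_le_natDeg hw'0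
      have hjle : j ≤ natDegree w := hjdef ▸ rootMultiplicity_le_natDeg hw0
      have hlt : natDegree w' - rootMultiplicity ζ w' < m := by omega
      have hmem := ih _ hlt w' hw'U le_rfl
      have hweq : w = w' + Dl ζ j w • u j := by rw [hw'def]; ring
      rw [hweq]
      exact Submodule.add_mem _ hmem (Submodule.smul_mem _ _ hspan_uj)

/-- If `U ⊆ ℂ[z]` has finite codimension and the set of gaps `ℕ \ I_ζ` is
nonempty with maximum `n`, then `U` has a basis `{ỹ_j}_{j ∈ I_ζ}` with `ord_ζ ỹ_j = j`,
normalized so that `ỹ_j^{(j)}(ζ) = 1`, and with `ỹ_j^{(i)}(ζ) = 0` for `i, j ∈ I_ζ`,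
`j < i < n`. -/
theorem stmt5 (U : Submodule ℂ (Polynomial ℂ)) [FiniteDimensional ℂ (Polynomial ℂ ⧸ U)]
    (ζ : ℂ) (n : ℕ) (hn : IsGreatest {k : ℕ | k ∉ orderSeq U ζ} n) :
    ∃ b : Module.Basis (orderSeq U ζ) ℂ U,
      (∀ j : orderSeq U ζ, rootMultiplicity ζ ((b j : Polynomial ℂ)) = (j : ℕ) ∧
        (derivative^[(j : ℕ)] ((b j : Polynomial ℂ))).eval ζ = 1) ∧
      (∀ i j : orderSeq U ζ, (j : ℕ) < (i : ℕ) → (i : ℕ) < n →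
        (derivative^[(i : ℕ)] ((b j : Polynomial ℂ))).eval ζ = 0) := by
  classical
  -- Step 1: choose normalized minimal-degree representatives of each order.
  have hchoice : ∀ j ∈ orderSeq U ζ, ∃ u, u ∈ U ∧ (∀ i < j, Dl ζ i u = 0) ∧ Dl ζ j u = 1 ∧
      ∀ w ∈ U, w ≠ 0 → rootMultiplicity ζ w = j → natDegree u ≤ natDegree w := by
    rintro j ⟨y, hyU, hy0, hyt⟩
    have hSne : {d | ∃ w, w ∈ U ∧ w ≠ 0 ∧ rootMultiplicity ζ w = j ∧ natDegree w = d}.Nonempty :=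
      ⟨natDegree y, y, hyU, hy0, hyt, rfl⟩
    obtain ⟨w, hwU, hw0, hwt, hwd⟩ := Nat.sInf_mem hSne
    have hc : Dl ζ j w ≠ 0 := by
      intro hc0
      have hge : j + 1 ≤ rootMultiplicity ζ w := by
        refine le_rootMultiplicity_of_Dl hw0 fun i hi => ?_
        rcases Nat.lt_succ_iff_lt_or_eq.mp hi with hlt | heq
        · exact Dl_eq_zero_of_lt (lt_of_lt_of_eq hlt hwt.symm)
        · subst heq; exact hc0
      omega
    refine ⟨(Dl ζ j w)⁻¹ • w, Submodule.smul_mem _ _ hwU, ?_, ?_, ?_⟩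
    · intro i hi
      rw [map_smul, smul_eq_mul, Dl_eq_zero_of_lt (lt_of_lt_of_eq hi hwt.symm), mul_zero]
    · rw [map_smul, smul_eq_mul, inv_mul_cancel₀ hc]
    · intro w' hw'U hw'0 hw't
      refine (natDegree_smul_le _ _).trans ?_
      rw [hwd]
      exact Nat.sInf_le ⟨w', hw'U, hw'0, hw't, rfl⟩
  choose! uu huu using hchoice
  have huU : ∀ j ∈ orderSeq U ζ, uu j ∈ U := fun j hj => (huu j hj).1
  have hu0 : ∀ j ∈ orderSeq U ζ, ∀ i < j, Dl ζ i (uu j) = 0 := fun j hj => (huu j hj).2.1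
  have hu1 : ∀ j ∈ orderSeq U ζ, Dl ζ j (uu j) = 1 := fun j hj => (huu j hj).2.2.1
  have humin : ∀ j ∈ orderSeq U ζ, ∀ w ∈ U, w ≠ 0 → rootMultiplicity ζ w = j →
      natDegree (uu j) ≤ natDegree w := fun j hj => (huu j hj).2.2.2
  -- Step 2: triangular elimination.
  set v : ℕ → Polynomial ℂ := elimSeq ζ (orderSeq U ζ) n uu with hv
  have hprops := elimSeq_props ζ U (orderSeq U ζ) n uu huU hu0 hu1
  -- The basis family.
  let f : orderSeq U ζ → U := fun j => ⟨v j, (hprops j j.2).1⟩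
  have hli : LinearIndependent ℂ f := by
    apply LinearIndependent.of_comp U.subtype
    rw [linearIndependent_iff']
    intro s g hsum i0 hi0
    by_contra hne
    have hne' : (s.filter fun i => g i ≠ 0).Nonempty :=
      ⟨i0, Finset.mem_filter.mpr ⟨hi0, hne⟩⟩
    obtain ⟨jm, hjm, hjmin⟩ :=
      Finset.exists_min_image _ (fun i : orderSeq U ζ => (i : ℕ)) hne'
    obtain ⟨hjms, hgjm⟩ := Finset.mem_filter.mp hjm
    have h0 : ∑ i ∈ s, Dl ζ jm (g i • (U.subtype ∘ f) i) = 0 := by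
      rw [← map_sum, hsum, map_zero]
    rw [Finset.sum_eq_single jm] at h0
    · apply hgjm
      rw [map_smul, smul_eq_mul] at h0
      have h1 : Dl ζ jm ((U.subtype ∘ f) jm) = 1 := (hprops jm jm.2).2.2.1
      rw [h1, mul_one] at h0
      exact h0
    · intro i hi hij
      by_cases hgi : g i = 0
      · rw [hgi, zero_smul, map_zero]
      · have hi' : i ∈ s.filter fun i => g i ≠ 0 := Finset.mem_filter.mpr ⟨hi, hgi⟩
        have hle := hjmin i hi'
        have hlt : (jm : ℕ) < (i : ℕ) :=
          lt_of_le_of_ne hle fun h => hij (Subtype.ext h.symm)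
        have hz : Dl ζ jm ((U.subtype ∘ f) i) = 0 := (hprops i i.2).2.1 jm hlt
        rw [map_smul, hz, smul_zero]
    · intro h
      exact absurd hjms h
  have hsp : ⊤ ≤ Submodule.span ℂ (Set.range f) := by
    rintro ⟨x, hx⟩ -
    have hx1 : x ∈ Submodule.span ℂ (uu '' orderSeq U ζ) :=
      span_of_minimal ζ U uu huU hu0 hu1 humin x hx
    have hx2 : Submodule.span ℂ (uu '' orderSeq U ζ) ≤
        Submodule.span ℂ (v '' orderSeq U ζ) := by
      rw [Submodule.span_le]
      rintro _ ⟨j, hj, rfl⟩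
      have hueq : uu j = v j + ∑ i ∈ Finset.Ioo j n,
          if i ∈ orderSeq U ζ then Dl ζ i (uu j) • v i else 0 := by
        rw [hv, elimSeq_eq]
        ring
      rw [hueq]
      refine Submodule.add_mem _ (Submodule.subset_span ⟨j, hj, rfl⟩)
        (Submodule.sum_mem _ fun i hi => ?_)
      split_ifs with h
      · exact Submodule.smul_mem _ _ (Submodule.subset_span ⟨i, h, rfl⟩)
      · exact Submodule.zero_mem _
    have hx3 : x ∈ Submodule.span ℂ (v '' orderSeq U ζ) := hx2 hx1
    have himg : U.subtype '' Set.range f = v '' orderSeq U ζ := by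
      ext p
      constructor
      · rintro ⟨q, ⟨j, rfl⟩, rfl⟩
        exact ⟨j, j.2, rfl⟩
      · rintro ⟨j, hj, rfl⟩
        exact ⟨f ⟨j, hj⟩, ⟨⟨j, hj⟩, rfl⟩, rfl⟩
    have hmap : x ∈ Submodule.map U.subtype (Submodule.span ℂ (Set.range f)) := by
      rw [Submodule.map_span, himg]
      exact hx3
    obtain ⟨y, hy, hyx⟩ := hmap
    have hyeq : y = ⟨x, hx⟩ := Subtype.ext hyx
    rwa [← hyeq]
  refine ⟨Module.Basis.mk hli hsp, ?_, ?_⟩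
  · intro j
    have hb : ((Module.Basis.mk hli hsp j : U) : Polynomial ℂ) = v j := by
      rw [Module.Basis.mk_apply]
    constructor
    · rw [hb]
      exact (rootMultiplicity_eq_of_Dl (fun i hi => (hprops j j.2).2.1 i hi)
        (by rw [(hprops j j.2).2.2.1]; exact one_ne_zero)).2
    · rw [hb, ← Dl_apply]
      exact (hprops j j.2).2.2.1
  · intro i j hji hin
    have hb : ((Module.Basis.mk hli hsp j : U) : Polynomial ℂ) = v j := by
      rw [Module.Basis.mk_apply]
    rw [hb, hv, ← Dl_apply]
    exact (hprops j j.2).2.2.2.1 i i.2 hji hin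
end

section
/- Suppose T = BA + λ₀ and T̂ = AB + λ₀ where A = b(D − w), B = (p/b)(D − ŵ) are as in a rational Darboux transformation, with w = φ'/φ. Then the weights W = (1/p)·exp(∫ q/p) and Ŵ = (1/p)·exp(∫ q̂/p) satisfy Ŵ = (p/b²)W, and the first-order coefficient transforms as q̂ = q + p' − 2(b'/b)p. -/
open Polynomial

noncomputable def rderiv (f : RatFunc ℂ) : RatFunc ℂ :=
  (algebraMap (Polynomial ℂ) (RatFunc ℂ) (derivative f.num) *
      algebraMap (Polynomial ℂ) (RatFunc ℂ) f.denom -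
    algebraMap (Polynomial ℂ) (RatFunc ℂ) f.num *
      algebraMap (Polynomial ℂ) (RatFunc ℂ) (derivative f.denom)) /
  (algebraMap (Polynomial ℂ) (RatFunc ℂ) f.denom) ^ 2

namespace Rd
local notation "φ" => algebraMap (Polynomial ℂ) (RatFunc ℂ)

lemma phi_ne_zero {a : Polynomial ℂ} (ha : a ≠ 0) : φ a ≠ 0 := by
  simpa using (map_ne_zero_iff _ (RatFunc.algebraMap_injective ℂ)).mpr ha

lemma rderiv_eq (f : RatFunc ℂ) :
    rderiv f = (φ (derivative f.num) * φ f.denom - φ f.num * φ (derivative f.denom)) /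
      (φ f.denom) ^ 2 := rfl

lemma num_mul_denom (f : RatFunc ℂ) : φ f.num = f * φ f.denom := by
  have h := RatFunc.num_div_denom f
  exact (div_eq_iff (phi_ne_zero (RatFunc.denom_ne_zero f))).mp h

lemma rderiv_div_poly (a b : Polynomial ℂ) (hb : b ≠ 0) :
    rderiv (φ a / φ b) =
      (φ (derivative a) * φ b - φ a * φ (derivative b)) / (φ b) ^ 2 := by
  set f := φ a / φ b with hf
  have hB : φ b ≠ 0 := phi_ne_zero hb
  have hD : φ f.denom ≠ 0 := phi_ne_zero (RatFunc.denom_ne_zero f)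
  have cross : f.num * b = a * f.denom := by
    apply RatFunc.algebraMap_injective ℂ
    have h : φ f.num / φ f.denom = φ a / φ b := by
      rw [RatFunc.num_div_denom]
    rw [map_mul, map_mul]
    exact (div_eq_div_iff hD hB).mp h
  have cross' : derivative f.num * b + f.num * derivative b
      = derivative a * f.denom + a * derivative f.denom := by
    have h := congrArg derivative cross
    rwa [derivative_mul, derivative_mul] at h
  have e1 : φ f.num * φ b = φ a * φ f.denom := by
    rw [← map_mul, ← map_mul, cross]
  have e2 : φ (derivative f.num) * φ b + φ f.num * φ (derivative b)
      = φ (derivative a) * φ f.denom + φ a * φ (derivative f.denom) := by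
    rw [← map_mul, ← map_mul, ← map_mul, ← map_mul, ← map_add, ← map_add, cross']
  rw [rderiv_eq f, div_eq_div_iff (pow_ne_zero 2 hD) (pow_ne_zero 2 hB)]
  linear_combination (-(φ (derivative b) * φ f.denom + φ b * φ (derivative f.denom))) * e1 +
    (φ b * φ f.denom) * e2

lemma rderiv_algebraMap (a : Polynomial ℂ) : rderiv (φ a) = φ (derivative a) := by
  have h : φ a = φ a / φ 1 := by simp
  rw [h, rderiv_div_poly a 1 one_ne_zero]
  simp

lemma rderiv_one : rderiv (1 : RatFunc ℂ) = 0 := by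
  have : (1 : RatFunc ℂ) = φ 1 := by simp
  rw [this, rderiv_algebraMap]; simp

lemma rderiv_zero : rderiv (0 : RatFunc ℂ) = 0 := by
  have : (0 : RatFunc ℂ) = φ 0 := by simp
  rw [this, rderiv_algebraMap]; simp

lemma rderiv_X : rderiv (RatFunc.X) = 1 := by
  rw [← RatFunc.algebraMap_X, rderiv_algebraMap, derivative_X]; simp

lemma rderiv_add_poly (fn fd gn gd : Polynomial ℂ) (hfd : fd ≠ 0) (hgd : gd ≠ 0) :
    rderiv (φ fn / φ fd + φ gn / φ gd)
      = rderiv (φ fn / φ fd) + rderiv (φ gn / φ gd) := by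
  have hBf : φ fd ≠ 0 := phi_ne_zero hfd
  have hBg : φ gd ≠ 0 := phi_ne_zero hgd
  have h3 : φ fn / φ fd + φ gn / φ gd = φ (fn * gd + gn * fd) / φ (fd * gd) := by
    rw [map_add, map_mul, map_mul, map_mul]
    field_simp
    try ring
  rw [h3, rderiv_div_poly _ _ (mul_ne_zero hfd hgd), rderiv_div_poly _ _ hfd,
    rderiv_div_poly _ _ hgd]
  simp only [derivative_add, derivative_mul, map_add, map_mul]
  field_simp
  ring

lemma rderiv_add (f g : RatFunc ℂ) : rderiv (f + g) = rderiv f + rderiv g := by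
  rw [← RatFunc.num_div_denom f, ← RatFunc.num_div_denom g]
  exact rderiv_add_poly _ _ _ _ (RatFunc.denom_ne_zero f) (RatFunc.denom_ne_zero g)

lemma rderiv_mul_poly (fn fd gn gd : Polynomial ℂ) (hfd : fd ≠ 0) (hgd : gd ≠ 0) :
    rderiv (φ fn / φ fd * (φ gn / φ gd))
      = rderiv (φ fn / φ fd) * (φ gn / φ gd) + (φ fn / φ fd) * rderiv (φ gn / φ gd) := by
  have hBf : φ fd ≠ 0 := phi_ne_zero hfd
  have hBg : φ gd ≠ 0 := phi_ne_zero hgd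
  have h3 : φ fn / φ fd * (φ gn / φ gd) = φ (fn * gn) / φ (fd * gd) := by
    rw [map_mul, map_mul, div_mul_div_comm]
  rw [h3, rderiv_div_poly _ _ (mul_ne_zero hfd hgd), rderiv_div_poly _ _ hfd,
    rderiv_div_poly _ _ hgd]
  simp only [derivative_mul, map_add, map_mul]
  field_simp
  ring

lemma rderiv_mul (f g : RatFunc ℂ) : rderiv (f * g) = rderiv f * g + f * rderiv g := by
  rw [← RatFunc.num_div_denom f, ← RatFunc.num_div_denom g]
  exact rderiv_mul_poly _ _ _ _ (RatFunc.denom_ne_zero f) (RatFunc.denom_ne_zero g)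

lemma rderiv_neg (f : RatFunc ℂ) : rderiv (-f) = -rderiv f := by
  have h := rderiv_add f (-f)
  simp only [add_neg_cancel, rderiv_zero] at h
  linear_combination -h

lemma rderiv_sub (f g : RatFunc ℂ) : rderiv (f - g) = rderiv f - rderiv g := by
  rw [sub_eq_add_neg, rderiv_add, rderiv_neg, sub_eq_add_neg]

lemma rderiv_div (f g : RatFunc ℂ) (hg : g ≠ 0) :
    rderiv (f / g) = (rderiv f * g - f * rderiv g) / g ^ 2 := by
  have h : f = (f / g) * g := by field_simp
  have h2 : rderiv f = rderiv (f / g) * g + (f / g) * rderiv g := by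
    nth_rewrite 1 [h]; exact rderiv_mul _ _
  have hcancel : f / g * g = f := div_mul_cancel₀ f hg
  rw [eq_div_iff (pow_ne_zero 2 hg)]
  linear_combination (-g) * h2 + (-(rderiv g)) * hcancel

end Rd

open Rd

theorem stmt8 (p q r qh rh b w : RatFunc ℂ) (lam : ℂ) (hp : p ≠ 0) (hb : b ≠ 0)
    (hT : ∀ y : RatFunc ℂ,
      (p / b) * (rderiv (b * (rderiv y - w * y)) -
          (-w - q / p + rderiv b / b) * (b * (rderiv y - w * y)))
        + RatFunc.C lam * y
      = p * rderiv (rderiv y) + q * rderiv y + r * y)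
    (hThat : ∀ y : RatFunc ℂ,
      b * (rderiv ((p / b) * (rderiv y - (-w - q / p + rderiv b / b) * y)) -
          w * ((p / b) * (rderiv y - (-w - q / p + rderiv b / b) * y)))
        + RatFunc.C lam * y
      = p * rderiv (rderiv y) + qh * rderiv y + rh * y) :
    qh = q + rderiv p - 2 * (rderiv b / b) * p ∧
    (qh - q) / p = rderiv (p / b ^ 2) / (p / b ^ 2) := by
  set V : RatFunc ℂ := -w - q / p + rderiv b / b with hV
  have e1 := hThat 1
  have e2 := hThat RatFunc.X
  have A1 : (p / b) * (rderiv (1 : RatFunc ℂ) - V * 1) = -((p / b) * V) := by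
    rw [rderiv_one]; ring
  rw [A1, rderiv_neg, rderiv_one, rderiv_zero] at e1
  have A2 : (p / b) * (rderiv RatFunc.X - V * RatFunc.X)
      = (p / b) - ((p / b) * V) * RatFunc.X := by
    rw [rderiv_X]; ring
  rw [A2, rderiv_sub] at e2
  rw [rderiv_mul ((p / b) * V) RatFunc.X] at e2
  rw [rderiv_X, rderiv_one] at e2
  have hkey : qh = b * rderiv (p / b) - b * ((p / b) * V) - b * (w * (p / b)) := by
    linear_combination RatFunc.X * e1 - e2
  have h1 : qh = q + rderiv p - 2 * (rderiv b / b) * p := by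
    rw [hkey, rderiv_div p b hb, hV]
    field_simp
    ring
  refine ⟨h1, ?_⟩
  have hb2 : b ^ 2 ≠ 0 := pow_ne_zero 2 hb
  have hsq : rderiv (b ^ 2) = rderiv b * b + b * rderiv b := by
    rw [sq]; exact rderiv_mul b b
  rw [h1, rderiv_div p (b ^ 2) hb2, hsq]
  field_simp
  ring
end

section
/- Let T be an exceptional second-order operator with rational coefficients, with maximal invariant polynomial subspace U of codimension ν in ℂ[z]. Then ν_ζ > 0 if and only if ζ is a pole of T (a pole of one of its coefficients p, q, r), and ν = Σ_{i=1}^N ν_{ζ_i} where ζ₁,…,ζ_N are the poles of T. -/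
open Polynomial

/-- The action of the second-order operator `T = pD² + qD + r` on rational functions. -/
noncomputable def Tapp (p q r : RatFunc ℂ) (y : RatFunc ℂ) : RatFunc ℂ :=
  p * rderiv (rderiv y) + q * rderiv y + r * y

/-- A polynomial subspace `V ⊆ ℂ[z]` is invariant under `T = pD² + qD + r`. -/
def TInvariant (p q r : RatFunc ℂ) (V : Submodule ℂ (Polynomial ℂ)) : Prop :=
  ∀ y ∈ V, ∃ u ∈ V,
    Tapp p q r (algebraMap (Polynomial ℂ) (RatFunc ℂ) y) =
      algebraMap (Polynomial ℂ) (RatFunc ℂ) u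

/-- The maximal `T`-invariant polynomial subspace. -/
noncomputable def maxInv (p q r : RatFunc ℂ) : Submodule ℂ (Polynomial ℂ) :=
  sSup {V | TInvariant p q r V}

/-- `T = pD² + qD + r` is an exceptional operator: there is a finite set of exceptional
degrees such that `T` has a polynomial eigenfunction of degree exactly `k` precisely for
`k` outside this set. -/
def IsExceptional (p q r : RatFunc ℂ) : Prop :=
  ∃ S : Finset ℕ, ∀ k : ℕ,
    (k ∉ S ↔ ∃ (y : Polynomial ℂ) (lam : ℂ), y.degree = k ∧
      Tapp p q r (algebraMap (Polynomial ℂ) (RatFunc ℂ) y) =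
        RatFunc.C lam * algebraMap (Polynomial ℂ) (RatFunc ℂ) y)

/-- `ν_ζ`, the number of gaps in the order sequence of `U` at `ζ`. -/
noncomputable def nuGaps (U : Submodule ℂ (Polynomial ℂ)) (ζ : ℂ) : ℕ :=
  Set.ncard {n : ℕ | n ∉ orderSeq U ζ}

/-- `ζ` is a pole of the rational function `f`. -/
def IsPoleOf (f : RatFunc ℂ) (ζ : ℂ) : Prop := f.denom.eval ζ = 0

namespace Stmt13

/-- divisibility by `(X - C ζ)^k` in terms of Taylor coefficients. -/
theorem tdvd_iff (ζ : ℂ) (k : ℕ) (w : Polynomial ℂ) :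
    (X - C ζ) ^ k ∣ w ↔ ∀ j < k, (taylor ζ w).coeff j = 0 := by
  rw [← X_pow_dvd_iff]
  have hpow : ∀ (c : ℂ) (u : Polynomial ℂ) (n : ℕ),
      taylor c (u ^ n) = (taylor c u) ^ n := by
    intro c u n
    simp [taylor_apply, pow_comp]
  constructor
  · rintro ⟨v, rfl⟩
    rw [taylor_mul, hpow]
    have : taylor ζ (X - C ζ) = X := by
      simp [taylor_apply, sub_comp]
    rw [this]
    exact Dvd.intro _ rfl
  · rintro ⟨v, hv⟩
    refine ⟨taylor (-ζ) v, ?_⟩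
    have hw : w = taylor (-ζ) (taylor ζ w) := by
      rw [taylor_taylor, neg_add_cancel, taylor_zero]
    have hX : taylor (-ζ) (X : Polynomial ℂ) = X - C ζ := by
      simp [taylor_apply, sub_eq_add_neg]
    rw [hw, hv, taylor_mul, hpow, hX]

theorem taylor_coeff_rootMultiplicity_ne_zero {w : Polynomial ℂ} (hw : w ≠ 0) (ζ : ℂ) :
    (taylor ζ w).coeff (rootMultiplicity ζ w) ≠ 0 := by
  intro h
  have hd := pow_rootMultiplicity_dvd w ζ
  rw [tdvd_iff] at hd
  have : (X - C ζ) ^ (rootMultiplicity ζ w + 1) ∣ w := by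
    rw [tdvd_iff]
    intro j hj
    rcases lt_or_eq_of_le (Nat.lt_succ_iff.mp hj) with h' | h'
    · exact hd j h'
    · rwa [h']
  exact pow_rootMultiplicity_not_dvd hw ζ this

theorem rootMultiplicity_eq_of_dvd_not_dvd {w : Polynomial ℂ} {ζ : ℂ} {k : ℕ}
    (h1 : (X - C ζ) ^ k ∣ w) (h2 : ¬ (X - C ζ) ^ (k + 1) ∣ w) :
    rootMultiplicity ζ w = k := by
  have hw : w ≠ 0 := by rintro rfl; exact h2 (dvd_zero _)
  refine le_antisymm ?_ ((le_rootMultiplicity_iff hw).mpr h1)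
  by_contra h
  push_neg at h
  exact h2 ((pow_dvd_pow _ h).trans (pow_rootMultiplicity_dvd w ζ))

theorem dvd_derivative {ζ : ℂ} {k : ℕ} {y : Polynomial ℂ}
    (h : (X - C ζ) ^ k ∣ y) : (X - C ζ) ^ (k - 1) ∣ derivative y := by
  obtain ⟨v, rfl⟩ := h
  rw [derivative_mul, derivative_pow]
  exact dvd_add (((dvd_mul_left _ _).mul_right _).mul_right _)
    ((pow_dvd_pow _ (Nat.sub_le _ _)).mul_right _)

/-- The operator `L y = A y'' + B y' + C y`. -/
noncomputable def Lf (a b c y : Polynomial ℂ) : Polynomial ℂ :=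
  a * derivative (derivative y) + b * derivative y + c * y

theorem Lf_sub (a b c y z : Polynomial ℂ) :
    Lf a b c (y - z) = Lf a b c y - Lf a b c z := by
  simp only [Lf, derivative_sub]
  ring

theorem dvd_Lf {a b c : Polynomial ℂ} {ζ : ℂ} {k : ℕ} {y : Polynomial ℂ}
    (h : (X - C ζ) ^ k ∣ y) : (X - C ζ) ^ (k - 2) ∣ Lf a b c y := by
  have h1 : (X - C ζ) ^ (k - 1) ∣ derivative y := dvd_derivative h
  have h2 : (X - C ζ) ^ (k - 2) ∣ derivative (derivative y) := by
    have := dvd_derivative h1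
    rwa [Nat.sub_sub] at this
  refine dvd_add (dvd_add (h2.mul_left _) ?_) ?_
  · exact ((pow_dvd_pow _ (Nat.sub_le_sub_left (by norm_num) k)).trans h1).mul_left _
  · exact ((pow_dvd_pow _ (Nat.sub_le k 2)).trans h).mul_left _

/-- the `(X - C ζ)`-adic closure of `U` inside `ℂ[X]`. -/
noncomputable def Cl (U : Submodule ℂ (Polynomial ℂ)) (ζ : ℂ) : Submodule ℂ (Polynomial ℂ) where
  carrier := {y | ∀ N : ℕ, ∃ u ∈ U, (X - C ζ) ^ N ∣ (y - u)}
  add_mem' := by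
    rintro a b ha hb N
    obtain ⟨u, hu, hdu⟩ := ha N
    obtain ⟨v, hv, hdv⟩ := hb N
    refine ⟨u + v, add_mem hu hv, ?_⟩
    have : a + b - (u + v) = (a - u) + (b - v) := by ring
    rw [this]
    exact dvd_add hdu hdv
  zero_mem' := fun N => ⟨0, Submodule.zero_mem _, by simp⟩
  smul_mem' := by
    rintro c a ha N
    obtain ⟨u, hu, hdu⟩ := ha N
    refine ⟨c • u, Submodule.smul_mem _ _ hu, ?_⟩
    have : c • a - c • u = c • (a - u) := by rw [smul_sub]
    rw [this, smul_eq_C_mul]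
    exact hdu.mul_left _

theorem mem_Cl_iff {U : Submodule ℂ (Polynomial ℂ)} {ζ : ℂ} {y : Polynomial ℂ} :
    y ∈ Cl U ζ ↔ ∀ N : ℕ, ∃ u ∈ U, (X - C ζ) ^ N ∣ (y - u) := Iff.rfl

theorem mem_Cl_of_mem {U : Submodule ℂ (Polynomial ℂ)} {ζ : ℂ} {y : Polynomial ℂ}
    (hy : y ∈ U) : y ∈ Cl U ζ :=
  fun _ => ⟨y, hy, by simp⟩

theorem le_Cl (U : Submodule ℂ (Polynomial ℂ)) (ζ : ℂ) : U ≤ Cl U ζ :=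
  fun _ hy => mem_Cl_of_mem hy

/-- Master approximation lemma: if a subspace `V` contains elements of every
`ζ`-order in `[lo, N)`, then every polynomial divisible by `(X - C ζ)^lo` can be
approximated by elements of `V` to order `N`. -/
theorem approx (V : Submodule ℂ (Polynomial ℂ)) (ζ : ℂ) (lo : ℕ) (N : ℕ) (y : Polynomial ℂ)
    (hwit : ∀ j, lo ≤ j → j < N → ∃ v ∈ V, v ≠ 0 ∧ rootMultiplicity ζ v = j)
    (hy : (X - C ζ) ^ lo ∣ y) : ∃ x ∈ V, (X - C ζ) ^ N ∣ (y - x) := by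
  induction N with
  | zero => exact ⟨0, V.zero_mem, by simp⟩
  | succ N ih =>
    rcases le_or_gt (N + 1) lo with hle | hlt
    · exact ⟨0, V.zero_mem, by simpa using (pow_dvd_pow _ hle).trans hy⟩
    · have hloN : lo ≤ N := Nat.lt_succ_iff.mp hlt
      obtain ⟨x, hxV, hx⟩ := ih (fun j h1 h2 => hwit j h1 (h2.trans (lt_add_one N)))
      by_cases hd : (X - C ζ) ^ (N + 1) ∣ (y - x)
      · exact ⟨x, hxV, hd⟩
      · have hne : y - x ≠ 0 := by
          intro h0
          rw [h0] at hd
          exact hd (dvd_zero _)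
        obtain ⟨v, hvV, hv0, hrv⟩ := hwit N hloN (lt_add_one N)
        have hb : (taylor ζ v).coeff N ≠ 0 := by
          have := taylor_coeff_rootMultiplicity_ne_zero hv0 ζ
          rwa [hrv] at this
        set c := (taylor ζ (y - x)).coeff N / (taylor ζ v).coeff N with hc
        refine ⟨x + c • v, add_mem hxV (Submodule.smul_mem _ _ hvV), ?_⟩
        rw [tdvd_iff]
        intro j hj
        have heq : y - (x + c • v) = (y - x) - c • v := by ring
        rw [heq, map_sub, map_smul, coeff_sub, coeff_smul, smul_eq_mul]
        have hvN : (X - C ζ) ^ N ∣ v := by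
          conv_lhs => rw [← hrv]
          exact pow_rootMultiplicity_dvd v ζ
        rcases lt_or_eq_of_le (Nat.lt_succ_iff.mp hj) with h' | h'
        · rw [(tdvd_iff ζ N _).mp hx j h', (tdvd_iff ζ N _).mp hvN j h', mul_zero, sub_zero]
        · rw [h', hc, div_mul_cancel₀ _ hb, sub_self]

theorem mem_Cl_of_orders {U : Submodule ℂ (Polynomial ℂ)} {ζ : ℂ} {lo : ℕ} {y : Polynomial ℂ}
    (hwit : ∀ j, lo ≤ j → ∃ v ∈ U, v ≠ 0 ∧ rootMultiplicity ζ v = j)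
    (hy : (X - C ζ) ^ lo ∣ y) : y ∈ Cl U ζ :=
  fun N => approx U ζ lo N y (fun j h1 _ => hwit j h1) hy

/-- if `w` is divisible by the local part of a monic `s` at each root, then `s ∣ w`. -/
theorem dvd_of_roots {s : Polynomial ℂ} (hsm : s.Monic) (w : Polynomial ℂ)
    (h : ∀ ζ : ℂ, s.eval ζ = 0 → (X - C ζ) ^ (rootMultiplicity ζ s) ∣ w) : s ∣ w := by
  classical
  by_cases hw : w = 0
  · simp [hw]
  have hs0 : s ≠ 0 := hsm.ne_zero
  have hsplit : s = (s.roots.map fun a => X - C a).prod :=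
    (IsAlgClosed.splits s).eq_prod_roots_of_monic hsm
  have hle : s.roots ≤ w.roots := by
    rw [Multiset.le_iff_count]
    intro ζ
    rw [count_roots, count_roots]
    by_cases hζ : s.eval ζ = 0
    · exact (le_rootMultiplicity_iff hw).mpr (h ζ hζ)
    · simp [rootMultiplicity_eq_zero hζ]
  calc s = (s.roots.map fun a => X - C a).prod := hsplit
    _ ∣ (w.roots.map fun a => X - C a).prod :=
        Multiset.prod_dvd_prod_of_le (Multiset.map_le_map hle)
    _ ∣ w := prod_multiset_X_sub_C_dvd w

/-- The subspace of polynomials lying in the closure of `U` at every root of `s`. -/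
noncomputable def Util (s : Polynomial ℂ) (U : Submodule ℂ (Polynomial ℂ)) :
    Submodule ℂ (Polynomial ℂ) where
  carrier := {y | ∀ ζ : ℂ, s.eval ζ = 0 → y ∈ Cl U ζ}
  add_mem' := fun ha hb ζ hζ => add_mem (ha ζ hζ) (hb ζ hζ)
  zero_mem' := fun ζ _ => Submodule.zero_mem _
  smul_mem' := fun c _ ha ζ hζ => Submodule.smul_mem _ c (ha ζ hζ)

theorem mem_Util_iff {s : Polynomial ℂ} {U : Submodule ℂ (Polynomial ℂ)} {y : Polynomial ℂ} :
    y ∈ Util s U ↔ ∀ ζ : ℂ, s.eval ζ = 0 → y ∈ Cl U ζ := Iff.rfl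

theorem U_le_Util (s : Polynomial ℂ) (U : Submodule ℂ (Polynomial ℂ)) : U ≤ Util s U :=
  fun _ hy ζ _ => le_Cl U ζ hy

/-- The closure subspace `Util` is again invariant. -/
theorem Util_inv {s a b c : Polynomial ℂ} {U : Submodule ℂ (Polynomial ℂ)}
    (hsm : s.Monic) (hUinv : ∀ y ∈ U, ∃ u ∈ U, Lf a b c y = s * u) :
    ∀ y ∈ Util s U, ∃ u ∈ Util s U, Lf a b c y = s * u := by
  intro y hy
  have hs0 : s ≠ 0 := hsm.ne_zero
  have hdvd : s ∣ Lf a b c y := by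
    refine dvd_of_roots hsm _ (fun ζ hζ => ?_)
    set m := rootMultiplicity ζ s with hm
    obtain ⟨u, hu, hdu⟩ := (mem_Cl_iff.mp (hy ζ hζ)) (m + 2)
    obtain ⟨u₂, _, hLu⟩ := hUinv u hu
    have h1 : (X - C ζ) ^ m ∣ Lf a b c u := by
      rw [hLu]
      exact (pow_rootMultiplicity_dvd s ζ).mul_right u₂
    have h2 : (X - C ζ) ^ m ∣ Lf a b c (y - u) := by
      have := dvd_Lf (a := a) (b := b) (c := c) hdu
      simpa using this
    have : Lf a b c y = Lf a b c (y - u) + Lf a b c u := by rw [Lf_sub]; ring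
    rw [this]
    exact dvd_add h2 h1
  obtain ⟨u₀, hLy⟩ := hdvd
  refine ⟨u₀, ?_, hLy⟩
  intro ζ hζ
  rw [mem_Cl_iff]
  intro N
  set m := rootMultiplicity ζ s with hm
  obtain ⟨u₁, hu₁, hdu₁⟩ := (mem_Cl_iff.mp (hy ζ hζ)) (N + m + 2)
  obtain ⟨v, hv, hLu₁⟩ := hUinv u₁ hu₁
  refine ⟨v, hv, ?_⟩
  have hsv : s * (u₀ - v) = Lf a b c (y - u₁) := by
    rw [Lf_sub, hLy, hLu₁]; ring
  have hD : (X - C ζ) ^ (N + m) ∣ Lf a b c (y - u₁) := by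
    have := dvd_Lf (a := a) (b := b) (c := c) hdu₁
    simpa using this
  by_cases h0 : u₀ - v = 0
  · rw [h0]; exact dvd_zero _
  · have hne : s * (u₀ - v) ≠ 0 := mul_ne_zero hs0 h0
    have hle : N + m ≤ rootMultiplicity ζ (s * (u₀ - v)) := by
      rw [le_rootMultiplicity_iff hne, hsv]
      exact hD
    rw [rootMultiplicity_mul hne] at hle
    have : N ≤ rootMultiplicity ζ (u₀ - v) := by omega
    exact ((le_rootMultiplicity_iff h0).mp this)

/-- root multiplicity of a triangular sum. -/
theorem rm_sum_eq {ι : Type*} [Fintype ι] (P : ι → Polynomial ℂ) (g : ι → ℂ) (ζ : ℂ)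
    (n₀ : ℕ) (i₀ : ι) (h₀ : g i₀ ≠ 0) (hP₀ : P i₀ ≠ 0)
    (hrm₀ : rootMultiplicity ζ (P i₀) = n₀)
    (hlow : ∀ i, g i ≠ 0 → (X - C ζ) ^ n₀ ∣ P i)
    (hother : ∀ i, i ≠ i₀ → g i ≠ 0 → (X - C ζ) ^ (n₀ + 1) ∣ P i) :
    (∑ i, g i • P i) ≠ 0 ∧ rootMultiplicity ζ (∑ i, g i • P i) = n₀ := by
  classical
  set w := ∑ i, g i • P i with hw
  have hdvd : (X - C ζ) ^ n₀ ∣ w := by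
    refine Finset.dvd_sum (fun i _ => ?_)
    by_cases hgi : g i = 0
    · simp [hgi]
    · rw [smul_eq_C_mul]
      exact (hlow i hgi).mul_left _
  have hcoeff : (taylor ζ w).coeff n₀ = g i₀ * (taylor ζ (P i₀)).coeff n₀ := by
    have h1 : (taylor ζ w) = ∑ i, g i • taylor ζ (P i) := by
      rw [hw, map_sum]
      simp
    rw [h1, finset_sum_coeff]
    rw [Finset.sum_eq_single i₀]
    · rw [coeff_smul, smul_eq_mul]
    · intro i _ hii
      by_cases hgi : g i = 0
      · simp [hgi]
      · rw [coeff_smul, smul_eq_mul,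
          (tdvd_iff ζ (n₀ + 1) _).mp (hother i hii hgi) n₀ (lt_add_one _), mul_zero]
    · intro h
      exact absurd (Finset.mem_univ i₀) h
  have hc0 : (taylor ζ w).coeff n₀ ≠ 0 := by
    rw [hcoeff]
    refine mul_ne_zero h₀ ?_
    have := taylor_coeff_rootMultiplicity_ne_zero hP₀ ζ
    rwa [hrm₀] at this
  have hnd : ¬ (X - C ζ) ^ (n₀ + 1) ∣ w := by
    intro hcon
    exact hc0 ((tdvd_iff ζ (n₀ + 1) _).mp hcon n₀ (lt_add_one _))
  have hw0 : w ≠ 0 := by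
    intro hcon
    rw [hcon] at hc0
    simp at hc0
  exact ⟨hw0, rootMultiplicity_eq_of_dvd_not_dvd hdvd hnd⟩

theorem rootMultiplicity_X_sub_C_pow (ζ : ℂ) (n : ℕ) :
    rootMultiplicity ζ ((X - C ζ) ^ n) = n := by
  refine rootMultiplicity_eq_of_dvd_not_dvd dvd_rfl (fun hcon => ?_)
  have h0 : ((X - C ζ) ^ n : Polynomial ℂ) ≠ 0 := pow_ne_zero _ (X_sub_C_ne_zero ζ)
  have := natDegree_le_of_dvd hcon h0
  simp only [natDegree_pow, natDegree_X_sub_C, mul_one] at this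
  omega

theorem card_le_of_gaps (U : Submodule ℂ (Polynomial ℂ))
    [FiniteDimensional ℂ (Polynomial ℂ ⧸ U)] (ζ : ℂ) (fs : Finset ℕ)
    (h : ∀ g ∈ fs, g ∉ orderSeq U ζ) :
    fs.card ≤ Module.finrank ℂ (Polynomial ℂ ⧸ U) := by
  classical
  have hli : LinearIndependent ℂ
      (fun i : {x // x ∈ fs} => U.mkQ ((X - C ζ) ^ (i : ℕ))) := by
    rw [Fintype.linearIndependent_iff]
    intro g hg
    by_contra hcon
    push_neg at hcon
    obtain ⟨iw, hiw⟩ := hcon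
    set w : Polynomial ℂ := ∑ i : {x // x ∈ fs}, g i • (X - C ζ) ^ (i : ℕ) with hwdef
    have hwU : w ∈ U := by
      rw [← Submodule.Quotient.mk_eq_zero, ← Submodule.mkQ_apply, hwdef, map_sum]
      simpa using hg
    set S := Finset.univ.filter (fun i : {x // x ∈ fs} => g i ≠ 0) with hS
    have hSne : S.Nonempty := ⟨iw, by simp [hS, hiw]⟩
    set Sim := S.image (fun i : {x // x ∈ fs} => (i : ℕ)) with hSim
    have hSimne : Sim.Nonempty := hSne.image _
    set n₀ := Sim.min' hSimne with hn₀
    obtain ⟨i₀, hi₀S, hi₀val⟩ := Finset.mem_image.mp (Sim.min'_mem hSimne)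
    have hgi₀ : g i₀ ≠ 0 := (Finset.mem_filter.mp hi₀S).2
    have key := rm_sum_eq (fun i : {x // x ∈ fs} => (X - C ζ) ^ (i : ℕ)) g ζ n₀ i₀ hgi₀
      (pow_ne_zero _ (X_sub_C_ne_zero ζ))
      (by rw [hn₀, ← hi₀val]; exact rootMultiplicity_X_sub_C_pow ζ _)
      (fun i hgi => pow_dvd_pow _ (Finset.min'_le _ _ (hSim ▸
        Finset.mem_image_of_mem _ (Finset.mem_filter.mpr ⟨Finset.mem_univ i, hgi⟩))))
      (fun i hii hgi => by
        refine pow_dvd_pow _ ?_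
        have hge : n₀ ≤ (i : ℕ) := Finset.min'_le _ _ (hSim ▸
          Finset.mem_image_of_mem _ (Finset.mem_filter.mpr ⟨Finset.mem_univ i, hgi⟩))
        have hne : (i : ℕ) ≠ n₀ := by
          intro hcon'
          apply hii
          apply Subtype.ext
          rw [hcon', hn₀, ← hi₀val]
        omega)
    exact h n₀ (by rw [hn₀, ← hi₀val]; exact i₀.2) ⟨w, hwU, key.1, key.2⟩
  have := hli.fintype_card_le_finrank
  simpa using this

theorem gapSet_finite (U : Submodule ℂ (Polynomial ℂ))
    [FiniteDimensional ℂ (Polynomial ℂ ⧸ U)] (ζ : ℂ) :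
    {n : ℕ | n ∉ orderSeq U ζ}.Finite := by
  by_contra hinf
  obtain ⟨fs, hfs, hcard⟩ := (show Set.Infinite _ from hinf).exists_subset_card_eq
    (Module.finrank ℂ (Polynomial ℂ ⧸ U) + 1)
  have := card_le_of_gaps U ζ fs (fun g hg => hfs hg)
  omega

theorem exists_G (U : Submodule ℂ (Polynomial ℂ))
    [FiniteDimensional ℂ (Polynomial ℂ ⧸ U)] (ζ : ℂ) :
    ∃ G : ℕ, ∀ j, G ≤ j → j ∈ orderSeq U ζ := by
  obtain ⟨b, hb⟩ := (gapSet_finite U ζ).bddAbove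
  refine ⟨b + 1, fun j hj => ?_⟩
  by_contra hcon
  have := hb (Set.mem_setOf_eq ▸ hcon)
  omega

section main
variable {s a b c : Polynomial ℂ} {U : Submodule ℂ (Polynomial ℂ)}

theorem Util_eq (hsm : s.Monic)
    (hUinv : ∀ y ∈ U, ∃ u ∈ U, Lf a b c y = s * u)
    (hUmax : ∀ V : Submodule ℂ (Polynomial ℂ),
      (∀ y ∈ V, ∃ u ∈ V, Lf a b c y = s * u) → V ≤ U) :
    Util s U = U :=
  le_antisymm (hUmax _ (Util_inv hsm hUinv)) (U_le_Util s U)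

/-- exact-order elements at a point, given high-order divisibility at the roots of s -/
theorem mem_orderSeq_of_regular [FiniteDimensional ℂ (Polynomial ℂ ⧸ U)]
    (hsm : s.Monic)
    (hUinv : ∀ y ∈ U, ∃ u ∈ U, Lf a b c y = s * u)
    (hUmax : ∀ V : Submodule ℂ (Polynomial ℂ),
      (∀ y ∈ V, ∃ u ∈ V, Lf a b c y = s * u) → V ≤ U)
    {ζ : ℂ} (hζ : s.eval ζ ≠ 0) (k : ℕ) : k ∈ orderSeq U ζ := by
  classical
  choose G hG using fun ζ' => exists_G U ζ'
  set Z : Finset ℂ := s.roots.toFinset with hZ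
  set P : Polynomial ℂ := ∏ ζ' ∈ Z, (X - C ζ') ^ (G ζ') with hP
  set y : Polynomial ℂ := (X - C ζ) ^ k * P with hy
  have hmemZ : ∀ ζ' : ℂ, ζ' ∈ Z ↔ s.eval ζ' = 0 := by
    intro ζ'
    rw [hZ, Multiset.mem_toFinset, mem_roots hsm.ne_zero]
    exact ⟨fun h => h, fun h => h⟩
  have hyU : y ∈ U := by
    rw [← Util_eq hsm hUinv hUmax, mem_Util_iff]
    intro ζ'' hζ''
    have hZ'' : ζ'' ∈ Z := (hmemZ ζ'').mpr hζ''
    refine mem_Cl_of_orders (lo := G ζ'') (fun j hj => hG ζ'' j hj) ?_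
    have : (X - C ζ'') ^ (G ζ'') ∣ P := Finset.dvd_prod_of_mem _ hZ''
    exact this.mul_left _
  have hζZ : ζ ∉ Z := fun h => hζ ((hmemZ ζ).mp h)
  have hPne : P.eval ζ ≠ 0 := by
    rw [hP, eval_prod]
    refine Finset.prod_ne_zero_iff.mpr (fun ζ' hζ' => ?_)
    have : ζ ≠ ζ' := fun h => hζZ (h ▸ hζ')
    simp only [eval_pow, eval_sub, eval_X, eval_C]
    exact pow_ne_zero _ (sub_ne_zero.mpr this)
  have hP0 : P ≠ 0 := fun h => hPne (by rw [h, eval_zero])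
  have hy0 : y ≠ 0 := mul_ne_zero (pow_ne_zero _ (X_sub_C_ne_zero ζ)) hP0
  have hrm : rootMultiplicity ζ y = k := by
    rw [hy, rootMultiplicity_mul (mul_ne_zero (pow_ne_zero _ (X_sub_C_ne_zero ζ)) hP0),
      rootMultiplicity_X_sub_C_pow, rootMultiplicity_eq_zero (fun h => hPne h), add_zero]
  exact ⟨y, hyU, hy0, hrm⟩

/-- at a "pole" of the operator (where not all of a,b,c are divisible by the local
part of s), the order sequence has a gap. -/
theorem exists_gap_of_pole [FiniteDimensional ℂ (Polynomial ℂ ⧸ U)]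
    (hUinv : ∀ y ∈ U, ∃ u ∈ U, Lf a b c y = s * u)
    {ζ : ℂ}
    (hnd : ¬ ((X - C ζ) ^ (rootMultiplicity ζ s) ∣ a ∧
        (X - C ζ) ^ (rootMultiplicity ζ s) ∣ b ∧
        (X - C ζ) ^ (rootMultiplicity ζ s) ∣ c)) :
    ∃ n : ℕ, n ∉ orderSeq U ζ := by
  by_contra hcon
  push_neg at hcon
  set m := rootMultiplicity ζ s with hm
  have hdvdL : ∀ y₀ : Polynomial ℂ, (X - C ζ) ^ m ∣ Lf a b c y₀ := by
    intro y₀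
    obtain ⟨u, huU, hdu⟩ := approx U ζ 0 (m + 2) y₀
      (fun j _ _ => hcon j) (by rw [pow_zero]; exact one_dvd _)
    obtain ⟨u₂, _, hLu⟩ := hUinv u huU
    have h1 : (X - C ζ) ^ m ∣ Lf a b c u := by
      rw [hLu]
      exact (pow_rootMultiplicity_dvd s ζ).mul_right u₂
    have h2 : (X - C ζ) ^ m ∣ Lf a b c (y₀ - u) := by
      have := dvd_Lf (a := a) (b := b) (c := c) hdu
      simpa using this
    have : Lf a b c y₀ = Lf a b c (y₀ - u) + Lf a b c u := by rw [Lf_sub]; ring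
    rw [this]
    exact dvd_add h2 h1
  have hc : (X - C ζ) ^ m ∣ c := by
    have := hdvdL 1
    simpa [Lf] using this
  have hb : (X - C ζ) ^ m ∣ b := by
    have h1 := hdvdL (X - C ζ)
    have h2 : Lf a b c (X - C ζ) = b + c * (X - C ζ) := by
      simp [Lf]
    rw [h2] at h1
    have := dvd_sub h1 (hc.mul_right (X - C ζ))
    simpa using this
  have ha : (X - C ζ) ^ m ∣ a := by
    have h1 := hdvdL ((X - C ζ) * (X - C ζ))
    have h2 : Lf a b c ((X - C ζ) * (X - C ζ)) =
        2 * a + 2 * (b * (X - C ζ)) + c * ((X - C ζ) * (X - C ζ)) := by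
      simp [Lf]
      ring
    rw [h2] at h1
    have h4 := dvd_sub (dvd_sub h1 ((hb.mul_right (X - C ζ)).mul_left 2))
      (hc.mul_right ((X - C ζ) * (X - C ζ)))
    have h5 : 2 * a + 2 * (b * (X - C ζ)) + c * ((X - C ζ) * (X - C ζ))
        - 2 * (b * (X - C ζ)) - c * ((X - C ζ) * (X - C ζ)) = 2 * a := by ring
    rw [h5] at h4
    have h7 : a = C (2⁻¹ : ℂ) * (2 * a) := by
      have h8 : (C (2⁻¹ : ℂ)) * 2 = 1 := by
        rw [← map_ofNat (C : ℂ →+* Polynomial ℂ) 2, ← C_mul]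
        norm_num
      rw [← mul_assoc, h8, one_mul]
    rw [h7]
    exact h4.mul_left _
  exact hnd ⟨ha, hb, hc⟩

end main
section main2
variable {s a b c : Polynomial ℂ} {U : Submodule ℂ (Polynomial ℂ)}

theorem finrank_eq_sum_gaps [FiniteDimensional ℂ (Polynomial ℂ ⧸ U)]
    (hsm : s.Monic)
    (hUinv : ∀ y ∈ U, ∃ u ∈ U, Lf a b c y = s * u)
    (hUmax : ∀ V : Submodule ℂ (Polynomial ℂ),
      (∀ y ∈ V, ∃ u ∈ V, Lf a b c y = s * u) → V ≤ U) :
    Module.finrank ℂ (Polynomial ℂ ⧸ U) =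
      ∑ᶠ ζ : ℂ, Set.ncard {n : ℕ | n ∉ orderSeq U ζ} := by
  classical
  choose G hG using fun ζ' => exists_G U ζ'
  set Z : Finset ℂ := s.roots.toFinset with hZ
  have hmemZ : ∀ ζ' : ℂ, ζ' ∈ Z ↔ s.eval ζ' = 0 := by
    intro ζ'
    rw [hZ, Multiset.mem_toFinset, mem_roots hsm.ne_zero]
    exact ⟨fun h => h, fun h => h⟩
  set gapF : ℂ → Finset ℕ := fun ζ => (gapSet_finite U ζ).toFinset with hgapF
  have hmemgap : ∀ ζ g, g ∈ gapF ζ ↔ g ∉ orderSeq U ζ := by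
    intro ζ g
    rw [hgapF]
    exact Set.Finite.mem_toFinset _
  have hgaplt : ∀ ζ g, g ∈ gapF ζ → g < G ζ := by
    intro ζ g hg
    by_contra hcon
    push_neg at hcon
    exact (hmemgap ζ g).mp hg (hG ζ g hcon)
  set D : Finset (ℂ × ℕ) := Z.biUnion (fun ζ => (gapF ζ).image (fun g => (ζ, g))) with hD
  have hmemD : ∀ ζ g, ((ζ, g) ∈ D) ↔ (ζ ∈ Z ∧ g ∈ gapF ζ) := by
    intro ζ g
    rw [hD]
    simp only [Finset.mem_biUnion, Finset.mem_image]
    constructor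
    · rintro ⟨ζ', hζ', g', hg', heq⟩
      injection heq with h1 h2
      subst h1
      subst h2
      exact ⟨hζ', hg'⟩
    · intro ⟨h1, h2⟩
      exact ⟨ζ, h1, g, h2, rfl⟩
  set wp : ℂ × ℕ → Polynomial ℂ :=
    fun d => (X - C d.1) ^ d.2 * ∏ ζ' ∈ Z.erase d.1, (X - C ζ') ^ (G ζ') with hwp
  have hw1 : ∀ ζ g, wp (ζ, g) ≠ 0 ∧ rootMultiplicity ζ (wp (ζ, g)) = g := by
    intro ζ g
    have hPne : (∏ ζ' ∈ Z.erase ζ, (X - C ζ') ^ (G ζ')).eval ζ ≠ 0 := by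
      rw [eval_prod]
      refine Finset.prod_ne_zero_iff.mpr (fun ζ' hζ' => ?_)
      have hne : ζ' ≠ ζ := (Finset.mem_erase.mp hζ').1
      simp only [eval_pow, eval_sub, eval_X, eval_C]
      exact pow_ne_zero _ (sub_ne_zero.mpr (Ne.symm hne))
    have hP0 : (∏ ζ' ∈ Z.erase ζ, (X - C ζ') ^ (G ζ')) ≠ 0 :=
      fun h => hPne (by rw [h, eval_zero])
    have h0 : wp (ζ, g) ≠ 0 := mul_ne_zero (pow_ne_zero _ (X_sub_C_ne_zero ζ)) hP0
    refine ⟨h0, ?_⟩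
    rw [hwp]
    rw [rootMultiplicity_mul (by exact h0), rootMultiplicity_X_sub_C_pow,
      rootMultiplicity_eq_zero (fun h => hPne h), add_zero]
  have hw2 : ∀ ζ g ζ₂, ζ ∈ Z → ζ₂ ∈ Z → ζ₂ ≠ ζ → (X - C ζ₂) ^ (G ζ₂) ∣ wp (ζ, g) := by
    intro ζ g ζ₂ hζ hζ₂ hne
    have : ζ₂ ∈ Z.erase ζ := Finset.mem_erase.mpr ⟨hne, hζ₂⟩
    exact (Finset.dvd_prod_of_mem _ this).mul_left _
  have hw3 : ∀ ζ g ζ₂, ζ ∈ Z → ζ₂ ∈ Z → ζ₂ ≠ ζ → wp (ζ, g) ∈ Cl U ζ₂ :=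
    fun ζ g ζ₂ h1 h2 h3 => mem_Cl_of_orders (hG ζ₂) (hw2 ζ g ζ₂ h1 h2 h3)
  -- linear independence of the images of the wp in the quotient
  have hli : LinearIndependent ℂ (fun d : {x // x ∈ D} => U.mkQ (wp d.val)) := by
    rw [Fintype.linearIndependent_iff]
    intro g hg
    by_contra hcon
    push_neg at hcon
    obtain ⟨dw, hdw⟩ := hcon
    set w : Polynomial ℂ := ∑ d : {x // x ∈ D}, g d • wp d.val with hwdef
    have hwU : w ∈ U := by
      rw [← Submodule.Quotient.mk_eq_zero, ← Submodule.mkQ_apply, hwdef, map_sum]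
      simpa using hg
    set ζ₁ := dw.val.1 with hζ₁
    set S := Finset.univ.filter (fun d : {x // x ∈ D} => g d ≠ 0 ∧ d.val.1 = ζ₁) with hS
    have hSne : S.Nonempty := ⟨dw, by simp [hS, hdw, hζ₁]⟩
    set Sim := S.image (fun d => d.val.2) with hSim
    have hSimne : Sim.Nonempty := hSne.image _
    set n₀ := Sim.min' hSimne with hn₀
    obtain ⟨i₀, hi₀S, hi₀val⟩ := Finset.mem_image.mp (Sim.min'_mem hSimne)
    have hgi₀ : g i₀ ≠ 0 := (Finset.mem_filter.mp hi₀S).2.1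
    have hi₀ζ : i₀.val.1 = ζ₁ := (Finset.mem_filter.mp hi₀S).2.2
    have hi₀eq : i₀.val = (ζ₁, n₀) := by
      rw [hn₀, ← hi₀val, ← hi₀ζ]
    have hi₀D : (ζ₁, n₀) ∈ D := hi₀eq ▸ i₀.2
    have hζ₁Z : ζ₁ ∈ Z := ((hmemD ζ₁ n₀).mp hi₀D).1
    have hn₀gap : n₀ ∈ gapF ζ₁ := ((hmemD ζ₁ n₀).mp hi₀D).2
    have hmemD' : ∀ d : {x // x ∈ D}, d.val.1 ∈ Z ∧ d.val.2 ∈ gapF d.val.1 := by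
      intro d
      have := d.2
      rw [← Prod.mk.eta (p := d.val)] at this
      exact (hmemD _ _).mp this
    have key := rm_sum_eq (fun d : {x // x ∈ D} => wp d.val) g ζ₁ n₀ i₀ hgi₀
      (by show wp i₀.val ≠ 0; rw [hi₀eq]; exact (hw1 ζ₁ n₀).1)
      (by show rootMultiplicity ζ₁ (wp i₀.val) = n₀; rw [hi₀eq]; exact (hw1 ζ₁ n₀).2)
      (by
        intro d hgd
        show (X - C ζ₁) ^ n₀ ∣ wp d.val
        by_cases hdζ : d.val.1 = ζ₁
        · have hdS : d ∈ S := Finset.mem_filter.mpr ⟨Finset.mem_univ d, hgd, hdζ⟩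
          have hle : n₀ ≤ d.val.2 := by
            rw [hn₀]
            exact Finset.min'_le _ _ (hSim ▸ Finset.mem_image_of_mem _ hdS)
          have hdvd : (X - C ζ₁) ^ (d.val.2) ∣ wp (ζ₁, d.val.2) := by
            conv_lhs => rw [← (hw1 ζ₁ d.val.2).2]
            exact pow_rootMultiplicity_dvd _ _
          have hpair : ((ζ₁ : ℂ), d.val.2) = d.val := by rw [← hdζ]
          rw [hpair] at hdvd
          exact (pow_dvd_pow _ hle).trans hdvd
        · have hd1Z : d.val.1 ∈ Z := (hmemD' d).1
          have hdvd : (X - C ζ₁) ^ (G ζ₁) ∣ wp (d.val.1, d.val.2) :=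
            hw2 d.val.1 d.val.2 ζ₁ hd1Z hζ₁Z (fun h => hdζ h.symm)
          rw [Prod.mk.eta] at hdvd
          exact (pow_dvd_pow _ (le_of_lt (hgaplt ζ₁ n₀ hn₀gap))).trans hdvd)
      (by
        intro d hdne hgd
        show (X - C ζ₁) ^ (n₀ + 1) ∣ wp d.val
        by_cases hdζ : d.val.1 = ζ₁
        · have hdS : d ∈ S := Finset.mem_filter.mpr ⟨Finset.mem_univ d, hgd, hdζ⟩
          have hle : n₀ ≤ d.val.2 := by
            rw [hn₀]
            exact Finset.min'_le _ _ (hSim ▸ Finset.mem_image_of_mem _ hdS)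
          have hne2 : d.val.2 ≠ n₀ := by
            intro hcon'
            apply hdne
            apply Subtype.ext
            rw [hi₀eq, ← hdζ, ← hcon', Prod.mk.eta]
          have hle' : n₀ + 1 ≤ d.val.2 := by omega
          have hdvd : (X - C ζ₁) ^ (d.val.2) ∣ wp (ζ₁, d.val.2) := by
            conv_lhs => rw [← (hw1 ζ₁ d.val.2).2]
            exact pow_rootMultiplicity_dvd _ _
          have hpair : ((ζ₁ : ℂ), d.val.2) = d.val := by rw [← hdζ]
          rw [hpair] at hdvd
          exact (pow_dvd_pow _ hle').trans hdvd
        · have hd1Z : d.val.1 ∈ Z := (hmemD' d).1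
          have hdvd : (X - C ζ₁) ^ (G ζ₁) ∣ wp (d.val.1, d.val.2) :=
            hw2 d.val.1 d.val.2 ζ₁ hd1Z hζ₁Z (fun h => hdζ h.symm)
          rw [Prod.mk.eta] at hdvd
          exact (pow_dvd_pow _ (hgaplt ζ₁ n₀ hn₀gap)).trans hdvd)
    exact (hmemgap ζ₁ n₀).mp hn₀gap ⟨w, hwU, key.1, key.2⟩
  -- spanning
  set Vbig : Submodule ℂ (Polynomial ℂ) :=
    U ⊔ Submodule.span ℂ (wp '' (D : Set (ℂ × ℕ))) with hVbig
  have hkey : ∀ W : Finset ℂ, W ⊆ Z → ∀ y : Polynomial ℂ,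
      ∃ x ∈ Vbig, ∀ ζ ∈ W, (y - x) ∈ Cl U ζ := by
    intro W
    induction W using Finset.induction_on with
    | empty =>
      intro _ y
      exact ⟨0, Submodule.zero_mem _, fun ζ h => absurd h (Finset.notMem_empty ζ)⟩
    | @insert ζ₀ W hζ₀W ih =>
      intro hsub y
      obtain ⟨x₁, hx₁V, hx₁⟩ := ih (Finset.insert_subset_iff.mp hsub).2 y
      have hζ₀Z : ζ₀ ∈ Z := (Finset.insert_subset_iff.mp hsub).1
      set V₀ : Submodule ℂ (Polynomial ℂ) :=
        U ⊔ Submodule.span ℂ ((fun g => wp (ζ₀, g)) '' (gapF ζ₀ : Set ℕ)) with hV₀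
      have hwit : ∀ j, 0 ≤ j → j < G ζ₀ →
          ∃ v ∈ V₀, v ≠ 0 ∧ rootMultiplicity ζ₀ v = j := by
        intro j _ _
        by_cases hj : j ∈ orderSeq U ζ₀
        · obtain ⟨v, hv, h0, hrm⟩ := hj
          exact ⟨v, Submodule.mem_sup_left hv, h0, hrm⟩
        · have hjg : j ∈ gapF ζ₀ := (hmemgap _ _).mpr hj
          exact ⟨wp (ζ₀, j), Submodule.mem_sup_right (Submodule.subset_span ⟨j, hjg, rfl⟩),
            (hw1 ζ₀ j).1, (hw1 ζ₀ j).2⟩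
      obtain ⟨x₂, hx₂V₀, hx₂⟩ := approx V₀ ζ₀ 0 (G ζ₀) (y - x₁) hwit
        (by rw [pow_zero]; exact one_dvd _)
      refine ⟨x₁ + x₂, ?_, ?_⟩
      · refine add_mem hx₁V ?_
        have hV₀le : V₀ ≤ Vbig := by
          refine sup_le le_sup_left ?_
          refine le_trans (Submodule.span_le.mpr ?_) le_sup_right
          rintro v ⟨gg, hgg, rfl⟩
          exact Submodule.subset_span ⟨(ζ₀, gg), (hmemD ζ₀ gg).mpr ⟨hζ₀Z, hgg⟩, rfl⟩
        exact hV₀le hx₂V₀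
      · intro ζ hζ
        rcases Finset.mem_insert.mp hζ with rfl | hζW
        · have heq : y - (x₁ + x₂) = (y - x₁) - x₂ := by ring
          rw [heq]
          exact mem_Cl_of_orders (hG ζ) hx₂
        · have h1 : (y - x₁) ∈ Cl U ζ := hx₁ ζ hζW
          have hx₂Cl : x₂ ∈ Cl U ζ := by
            have hV₀Cl : V₀ ≤ Cl U ζ := by
              refine sup_le (le_Cl U ζ) (Submodule.span_le.mpr ?_)
              rintro v ⟨gg, hgg, rfl⟩
              have hζZ : ζ ∈ Z := hsub (Finset.mem_insert_of_mem hζW)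
              have hne : ζ ≠ ζ₀ := by rintro rfl; exact hζ₀W hζW
              exact hw3 ζ₀ gg ζ hζ₀Z hζZ hne
            exact hV₀Cl hx₂V₀
          have heq : y - (x₁ + x₂) = (y - x₁) - x₂ := by ring
          rw [heq]
          exact sub_mem h1 hx₂Cl
  have hVtop : ∀ y : Polynomial ℂ, y ∈ Vbig := by
    intro y
    obtain ⟨x, hxV, hx⟩ := hkey Z (subset_refl _) y
    have hyx : y - x ∈ U := by
      rw [← Util_eq hsm hUinv hUmax, mem_Util_iff]
      intro ζ hζ
      exact hx ζ ((hmemZ ζ).mpr hζ)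
    have heq : y = (y - x) + x := by ring
    rw [heq]
    exact add_mem (Submodule.mem_sup_left hyx) hxV
  have hspan : ⊤ ≤ Submodule.span ℂ
      (Set.range (fun d : {x // x ∈ D} => U.mkQ (wp d.val))) := by
    intro q _
    obtain ⟨y, rfl⟩ := U.mkQ_surjective q
    have hy := hVtop y
    rw [hVbig, Submodule.mem_sup] at hy
    obtain ⟨u, huU, v, hv, rfl⟩ := hy
    rw [map_add]
    have h1 : U.mkQ u = 0 := by
      rw [Submodule.mkQ_apply, Submodule.Quotient.mk_eq_zero]
      exact huU
    rw [h1, zero_add]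
    have h2 : U.mkQ v ∈ Submodule.map U.mkQ (Submodule.span ℂ (wp '' (D : Set (ℂ × ℕ)))) :=
      Submodule.mem_map_of_mem hv
    rw [Submodule.map_span] at h2
    refine Submodule.span_mono ?_ h2
    rintro _ ⟨_, ⟨d, hd, rfl⟩, rfl⟩
    exact ⟨⟨d, hd⟩, rfl⟩
  let bas : Module.Basis {x // x ∈ D} ℂ (Polynomial ℂ ⧸ U) := Module.Basis.mk hli hspan
  have hfr : Module.finrank ℂ (Polynomial ℂ ⧸ U) = D.card := by
    rw [Module.finrank_eq_card_basis bas, Fintype.card_coe]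
  rw [hfr]
  -- the sum computation
  have hsupp : (Function.support fun ζ => Set.ncard {n : ℕ | n ∉ orderSeq U ζ}) ⊆ ↑Z := by
    intro ζ hζ
    rw [Function.mem_support] at hζ
    by_contra hcon
    apply hζ
    have hreg : s.eval ζ ≠ 0 := fun h => hcon ((hmemZ ζ).mpr h)
    have : {n : ℕ | n ∉ orderSeq U ζ} = ∅ := by
      ext n
      simp only [Set.mem_setOf_eq, Set.mem_empty_iff_false, iff_false, not_not]
      exact mem_orderSeq_of_regular hsm hUinv hUmax hreg n
    rw [this, Set.ncard_empty]
  rw [finsum_eq_sum_of_support_subset _ hsupp]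
  have hcards : ∀ ζ ∈ Z, Set.ncard {n : ℕ | n ∉ orderSeq U ζ} = (gapF ζ).card := by
    intro ζ _
    rw [Set.ncard_eq_toFinset_card _ (gapSet_finite U ζ)]
  rw [Finset.sum_congr rfl hcards, hD]
  rw [Finset.card_biUnion]
  · refine Finset.sum_congr rfl (fun ζ _ => ?_)
    rw [Finset.card_image_of_injective _ (fun g₁ g₂ h => (Prod.ext_iff.mp h).2)]
  · intro ζ₁ h₁ ζ₂ h₂ hne
    rw [Function.onFun, Finset.disjoint_left]
    rintro d hd1 hd2
    obtain ⟨g₁, _, rfl⟩ := Finset.mem_image.mp hd1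
    obtain ⟨g₂, _, heq⟩ := Finset.mem_image.mp hd2
    exact hne (Prod.ext_iff.mp heq).1.symm

end main2
section glue
variable (p q r : RatFunc ℂ)

noncomputable def sden : Polynomial ℂ := p.denom * (q.denom * r.denom)
noncomputable def ca : Polynomial ℂ := p.num * (q.denom * r.denom)
noncomputable def cb : Polynomial ℂ := q.num * (p.denom * r.denom)
noncomputable def cc : Polynomial ℂ := r.num * (p.denom * q.denom)

theorem sden_monic : (sden p q r).Monic :=
  (p.monic_denom).mul ((q.monic_denom).mul (r.monic_denom))

theorem rderiv_algebraMap (y : Polynomial ℂ) :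
    rderiv (algebraMap (Polynomial ℂ) (RatFunc ℂ) y) =
      algebraMap (Polynomial ℂ) (RatFunc ℂ) (derivative y) := by
  unfold rderiv
  rw [RatFunc.num_algebraMap, RatFunc.denom_algebraMap]
  simp

theorem Tapp_eq (y : Polynomial ℂ) :
    Tapp p q r (algebraMap (Polynomial ℂ) (RatFunc ℂ) y) *
        algebraMap (Polynomial ℂ) (RatFunc ℂ) (sden p q r) =
      algebraMap (Polynomial ℂ) (RatFunc ℂ) (Lf (ca p q r) (cb p q r) (cc p q r) y) := by
  have hp : p * algebraMap (Polynomial ℂ) (RatFunc ℂ) p.denom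
      = algebraMap (Polynomial ℂ) (RatFunc ℂ) p.num := by
    exact ((div_eq_iff (RatFunc.algebraMap_ne_zero p.denom_ne_zero)).mp
      (RatFunc.num_div_denom p)).symm
  have hq : q * algebraMap (Polynomial ℂ) (RatFunc ℂ) q.denom
      = algebraMap (Polynomial ℂ) (RatFunc ℂ) q.num := by
    exact ((div_eq_iff (RatFunc.algebraMap_ne_zero q.denom_ne_zero)).mp
      (RatFunc.num_div_denom q)).symm
  have hr : r * algebraMap (Polynomial ℂ) (RatFunc ℂ) r.denom
      = algebraMap (Polynomial ℂ) (RatFunc ℂ) r.num := by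
    exact ((div_eq_iff (RatFunc.algebraMap_ne_zero r.denom_ne_zero)).mp
      (RatFunc.num_div_denom r)).symm
  unfold Tapp
  simp only [rderiv_algebraMap]
  unfold Lf sden ca cb cc
  simp only [map_mul, map_add]
  linear_combination
    (algebraMap (Polynomial ℂ) (RatFunc ℂ) q.denom *
      algebraMap (Polynomial ℂ) (RatFunc ℂ) r.denom *
      algebraMap (Polynomial ℂ) (RatFunc ℂ) (derivative (derivative y))) * hp +
    (algebraMap (Polynomial ℂ) (RatFunc ℂ) p.denom *
      algebraMap (Polynomial ℂ) (RatFunc ℂ) r.denom *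
      algebraMap (Polynomial ℂ) (RatFunc ℂ) (derivative y)) * hq +
    (algebraMap (Polynomial ℂ) (RatFunc ℂ) p.denom *
      algebraMap (Polynomial ℂ) (RatFunc ℂ) q.denom *
      algebraMap (Polynomial ℂ) (RatFunc ℂ) y) * hr

theorem TInvariant_iff (V : Submodule ℂ (Polynomial ℂ)) :
    TInvariant p q r V ↔
      ∀ y ∈ V, ∃ u ∈ V, Lf (ca p q r) (cb p q r) (cc p q r) y = sden p q r * u := by
  have hsne : algebraMap (Polynomial ℂ) (RatFunc ℂ) (sden p q r) ≠ 0 :=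
    RatFunc.algebraMap_ne_zero (sden_monic p q r).ne_zero
  constructor
  · intro hV y hy
    obtain ⟨u, hu, heq⟩ := hV y hy
    refine ⟨u, hu, ?_⟩
    have := Tapp_eq p q r y
    rw [heq] at this
    have h2 : algebraMap (Polynomial ℂ) (RatFunc ℂ) (u * sden p q r) =
        algebraMap (Polynomial ℂ) (RatFunc ℂ)
          (Lf (ca p q r) (cb p q r) (cc p q r) y) := by
      rw [map_mul]; exact this
    have h3 := RatFunc.algebraMap_injective ℂ h2
    rw [← h3, mul_comm]
  · intro hV y hy
    obtain ⟨u, hu, heq⟩ := hV y hy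
    refine ⟨u, hu, ?_⟩
    have h1 := Tapp_eq p q r y
    rw [heq, map_mul] at h1
    exact mul_right_cancel₀ hsne (by rw [h1]; ring)

theorem maxInv_inv : ∀ y ∈ maxInv p q r, ∃ u ∈ maxInv p q r,
    Lf (ca p q r) (cb p q r) (cc p q r) y = sden p q r * u := by
  classical
  set LM : Polynomial ℂ →ₗ[ℂ] Polynomial ℂ :=
    (LinearMap.mulLeft ℂ (ca p q r)).comp
      ((Polynomial.derivative (R := ℂ)).comp (Polynomial.derivative (R := ℂ)))
    + (LinearMap.mulLeft ℂ (cb p q r)).comp (Polynomial.derivative (R := ℂ))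
    + LinearMap.mulLeft ℂ (cc p q r) with hLMdef
  have hLM : ∀ y, LM y = Lf (ca p q r) (cb p q r) (cc p q r) y := by
    intro y
    simp [hLMdef, Lf]
  set W := Submodule.comap LM
    (Submodule.map (LinearMap.mulLeft ℂ (sden p q r)) (maxInv p q r)) with hW
  have hle : maxInv p q r ≤ W := by
    rw [maxInv]
    refine sSup_le (fun V hV => ?_)
    intro y hy
    obtain ⟨u, hu, heq⟩ := (TInvariant_iff p q r V).mp hV y hy
    refine Submodule.mem_comap.mpr (Submodule.mem_map.mpr ⟨u, le_sSup hV hu, ?_⟩)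
    rw [LinearMap.mulLeft_apply, hLM, heq]
  intro y hy
  obtain ⟨u, hu, heq⟩ := Submodule.mem_map.mp (Submodule.mem_comap.mp (hle hy))
  refine ⟨u, hu, ?_⟩
  rw [← hLM, ← heq, LinearMap.mulLeft_apply]

theorem maxInv_max (V : Submodule ℂ (Polynomial ℂ))
    (hV : ∀ y ∈ V, ∃ u ∈ V, Lf (ca p q r) (cb p q r) (cc p q r) y = sden p q r * u) :
    V ≤ maxInv p q r :=
  le_sSup ((TInvariant_iff p q r V).mpr hV)

theorem pole_iff (ζ : ℂ) :
    (IsPoleOf p ζ ∨ IsPoleOf q ζ ∨ IsPoleOf r ζ) ↔ (sden p q r).eval ζ = 0 := by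
  unfold IsPoleOf sden
  rw [eval_mul, eval_mul, mul_eq_zero, mul_eq_zero]

theorem num_eval_ne_zero {f : RatFunc ℂ} {ζ : ℂ} (hf : f.denom.eval ζ = 0) :
    f.num.eval ζ ≠ 0 := by
  intro hcon
  obtain ⟨a', b', hab⟩ := f.isCoprime_num_denom
  have h1 := congrArg (eval ζ) hab
  rw [eval_add, eval_mul, eval_mul, hf, hcon, mul_zero, mul_zero] at h1
  simp at h1

theorem not_all_dvd (ζ : ℂ) (hζ : (sden p q r).eval ζ = 0) :
    ¬ ((X - C ζ) ^ (rootMultiplicity ζ (sden p q r)) ∣ ca p q r ∧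
       (X - C ζ) ^ (rootMultiplicity ζ (sden p q r)) ∣ cb p q r ∧
       (X - C ζ) ^ (rootMultiplicity ζ (sden p q r)) ∣ cc p q r) := by
  rintro ⟨hA, hB, hC⟩
  have hm : rootMultiplicity ζ (sden p q r) = rootMultiplicity ζ p.denom +
      (rootMultiplicity ζ q.denom + rootMultiplicity ζ r.denom) := by
    unfold sden
    rw [rootMultiplicity_mul (mul_ne_zero p.denom_ne_zero
        (mul_ne_zero q.denom_ne_zero r.denom_ne_zero)),
      rootMultiplicity_mul (mul_ne_zero q.denom_ne_zero r.denom_ne_zero)]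
  have hζ' := hζ
  unfold sden at hζ'
  rw [eval_mul, eval_mul, mul_eq_zero, mul_eq_zero] at hζ'
  rcases hζ' with hpd | hqd | hrd
  · have hnum0 : p.num ≠ 0 := fun h => num_eval_ne_zero hpd (by rw [h, eval_zero])
    have hca0 : ca p q r ≠ 0 := mul_ne_zero hnum0
      (mul_ne_zero q.denom_ne_zero r.denom_ne_zero)
    have hle := (le_rootMultiplicity_iff hca0).mpr hA
    have hrmca : rootMultiplicity ζ (ca p q r) = rootMultiplicity ζ p.num +
        (rootMultiplicity ζ q.denom + rootMultiplicity ζ r.denom) := by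
      unfold ca
      rw [rootMultiplicity_mul (by exact hca0),
        rootMultiplicity_mul (mul_ne_zero q.denom_ne_zero r.denom_ne_zero)]
    have h1 : rootMultiplicity ζ p.num = 0 :=
      rootMultiplicity_eq_zero (num_eval_ne_zero hpd)
    have h2 : 1 ≤ rootMultiplicity ζ p.denom :=
      (rootMultiplicity_pos p.denom_ne_zero).mpr hpd
    omega
  · have hnum0 : q.num ≠ 0 := fun h => num_eval_ne_zero hqd (by rw [h, eval_zero])
    have hcb0 : cb p q r ≠ 0 := mul_ne_zero hnum0
      (mul_ne_zero p.denom_ne_zero r.denom_ne_zero)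
    have hle := (le_rootMultiplicity_iff hcb0).mpr hB
    have hrmcb : rootMultiplicity ζ (cb p q r) = rootMultiplicity ζ q.num +
        (rootMultiplicity ζ p.denom + rootMultiplicity ζ r.denom) := by
      unfold cb
      rw [rootMultiplicity_mul (by exact hcb0),
        rootMultiplicity_mul (mul_ne_zero p.denom_ne_zero r.denom_ne_zero)]
    have h1 : rootMultiplicity ζ q.num = 0 :=
      rootMultiplicity_eq_zero (num_eval_ne_zero hqd)
    have h2 : 1 ≤ rootMultiplicity ζ q.denom :=
      (rootMultiplicity_pos q.denom_ne_zero).mpr hqd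
    omega
  · have hnum0 : r.num ≠ 0 := fun h => num_eval_ne_zero hrd (by rw [h, eval_zero])
    have hcc0 : cc p q r ≠ 0 := mul_ne_zero hnum0
      (mul_ne_zero p.denom_ne_zero q.denom_ne_zero)
    have hle := (le_rootMultiplicity_iff hcc0).mpr hC
    have hrmcc : rootMultiplicity ζ (cc p q r) = rootMultiplicity ζ r.num +
        (rootMultiplicity ζ p.denom + rootMultiplicity ζ q.denom) := by
      unfold cc
      rw [rootMultiplicity_mul (by exact hcc0),
        rootMultiplicity_mul (mul_ne_zero p.denom_ne_zero q.denom_ne_zero)]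
    have h1 : rootMultiplicity ζ r.num = 0 :=
      rootMultiplicity_eq_zero (num_eval_ne_zero hrd)
    have h2 : 1 ≤ rootMultiplicity ζ r.denom :=
      (rootMultiplicity_pos r.denom_ne_zero).mpr hrd
    omega
end glue
end Stmt13


/-- For an exceptional operator `T` with maximal invariant polynomial
subspace `U` of finite codimension `ν`: the order sequence of `U` at `ζ` has a gap
(`ν_ζ > 0`) iff `ζ` is a pole of one of the coefficients `p, q, r`, and
`ν = Σ_ζ ν_ζ` (a finite sum, supported on the poles of `T`). -/
theorem stmt13 (p q r : RatFunc ℂ) (hT : IsExceptional p q r)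
    [FiniteDimensional ℂ (Polynomial ℂ ⧸ maxInv p q r)] :
    (∀ ζ : ℂ, 0 < nuGaps (maxInv p q r) ζ ↔
      (IsPoleOf p ζ ∨ IsPoleOf q ζ ∨ IsPoleOf r ζ)) ∧
    Module.finrank ℂ (Polynomial ℂ ⧸ maxInv p q r) =
      ∑ᶠ ζ : ℂ, nuGaps (maxInv p q r) ζ := by
  classical
  have hsm := Stmt13.sden_monic p q r
  have hinv := Stmt13.maxInv_inv p q r
  have hmax := Stmt13.maxInv_max p q r
  constructor
  · intro ζ
    constructor
    · intro h
      by_contra hcon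
      have hreg : (Stmt13.sden p q r).eval ζ ≠ 0 :=
        fun h0 => hcon ((Stmt13.pole_iff p q r ζ).mpr h0)
      have hall : ∀ k, k ∈ orderSeq (maxInv p q r) ζ :=
        fun k => Stmt13.mem_orderSeq_of_regular hsm hinv hmax hreg k
      have hempty : {n : ℕ | n ∉ orderSeq (maxInv p q r) ζ} = ∅ := by
        ext n
        simp only [Set.mem_setOf_eq, Set.mem_empty_iff_false, iff_false, not_not]
        exact hall n
      rw [nuGaps, hempty, Set.ncard_empty] at h
      exact lt_irrefl 0 h
    · intro hpole
      have h0 : (Stmt13.sden p q r).eval ζ = 0 := (Stmt13.pole_iff p q r ζ).mp hpole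
      obtain ⟨n, hn⟩ := Stmt13.exists_gap_of_pole hinv (Stmt13.not_all_dvd p q r ζ h0)
      have hfin := Stmt13.gapSet_finite (maxInv p q r) ζ
      rw [nuGaps]
      exact (Set.ncard_pos hfin).mpr ⟨n, hn⟩
  · have := Stmt13.finrank_eq_sum_gaps hsm hinv hmax
    rw [this]
    rfl
end

section
/- If T is an exceptional second-order operator with rational coefficients, then its leading coefficient p(z) is a polynomial, and every pole of the first-order coefficient q(z) is simple. -/
open Polynomial

namespace Stmt14Aux

/-- Polynomials with distinct natural degrees are linearly independent. -/
lemma li_of_natDegree_inj {ι : Type*} (f : ι → Polynomial ℂ)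
    (h0 : ∀ i, f i ≠ 0) (hinj : Function.Injective fun i => (f i).natDegree) :
    LinearIndependent ℂ f := by
  rw [linearIndependent_iff']
  intro s g hsum i hi
  by_contra hgi
  classical
  have hne : (s.filter fun j => g j ≠ 0).Nonempty := ⟨i, Finset.mem_filter.2 ⟨hi, hgi⟩⟩
  obtain ⟨j, hj, hjmax⟩ := Finset.exists_max_image (s.filter fun j => g j ≠ 0)
    (fun j => (f j).natDegree) hne
  have hjs : j ∈ s := (Finset.mem_filter.1 hj).1
  have hgj : g j ≠ 0 := (Finset.mem_filter.1 hj).2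
  have hcoeff := congrArg (fun P => Polynomial.coeff P (f j).natDegree) hsum
  simp only [Polynomial.finset_sum_coeff, Polynomial.coeff_smul, Polynomial.coeff_zero,
    smul_eq_mul] at hcoeff
  rw [Finset.sum_eq_single j] at hcoeff
  · exact hgj (by
      have hlc : (f j).coeff (f j).natDegree ≠ 0 := Polynomial.leadingCoeff_ne_zero.2 (h0 j)
      exact (mul_eq_zero.1 hcoeff).resolve_right hlc)
  · intro b hb hbj
    by_cases hgb : g b = 0
    · simp [hgb]
    · have hble : (f b).natDegree ≤ (f j).natDegree :=
        hjmax b (Finset.mem_filter.2 ⟨hb, hgb⟩)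
      have hbne : (f b).natDegree ≠ (f j).natDegree := fun h => hbj (hinj h)
      rw [Polynomial.coeff_eq_zero_of_natDegree_lt (lt_of_le_of_ne hble hbne), mul_zero]
  · intro h; exact absurd hjs h

lemma taylor_coeff_rm_ne_zero (ζ : ℂ) {y : Polynomial ℂ} (hy : y ≠ 0) :
    (taylor ζ y).coeff (rootMultiplicity ζ y) ≠ 0 := by
  set m := rootMultiplicity ζ y with hm
  have hfac := Polynomial.pow_mul_divByMonic_rootMultiplicity_eq y ζ
  have heval : ((y /ₘ (X - C ζ) ^ m).eval ζ) ≠ 0 :=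
    Polynomial.eval_divByMonic_pow_rootMultiplicity_ne_zero ζ hy
  set g := y /ₘ (X - C ζ) ^ m with hg
  have htw : taylor ζ (X - C ζ) = X := by
    rw [map_sub, taylor_X, taylor_C]; ring
  have htpow : taylor ζ ((X - C ζ) ^ m) = X ^ m := by
    induction m with
    | zero => simpa using (taylor_one (R := ℂ) (r := ζ))
    | succ n ihn => rw [pow_succ, taylor_mul, ihn, htw, pow_succ]
  have : taylor ζ y = X ^ m * taylor ζ g := by
    conv_lhs => rw [← hfac]
    rw [taylor_mul, htpow]
  rw [this]
  have := Polynomial.coeff_X_pow_mul (taylor ζ g) m 0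
  rw [zero_add] at this
  rw [this, taylor_coeff_zero]
  exact heval


/-- The order set of the span of a set containing polynomials of almost all degrees is
cofinite. -/
lemma orderSet_cofinite (ζ : ℂ) (E : Set (Polynomial ℂ)) (S : Finset ℕ)
    (hdeg : ∀ k : ℕ, k ∉ S → ∃ y ∈ E, y.degree = (k : ℕ)) :
    ∃ N : ℕ, ∀ m ≥ N, ∃ y ∈ Submodule.span ℂ E, y ≠ 0 ∧ rootMultiplicity ζ y = m := by
  classical
  set M : Set ℕ := {m | ∃ y ∈ Submodule.span ℂ E, y ≠ 0 ∧ rootMultiplicity ζ y = m} with hM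
  -- step 1 : any finset disjoint from M has card ≤ S.card
  have step1 : ∀ Tf : Finset ℕ, (∀ x ∈ Tf, x ∉ M) → Tf.card ≤ S.card := by
    intro Tf hTf
    set n := Tf.sup id with hn
    have hTfsub : Tf ⊆ Finset.range (n + 1) := by
      intro x hx
      exact Finset.mem_range.2 (Nat.lt_succ_of_le (Finset.le_sup (f := id) hx))
    set D : Finset ℕ := Finset.range (n + 1) \ S with hD
    -- choose polynomials of each degree in D
    have hex : ∀ k : {x // x ∈ D}, ∃ y ∈ E, y.degree = ((k : ℕ) : WithBot ℕ) := by
      intro ⟨k, hk⟩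
      exact hdeg k (Finset.mem_sdiff.1 hk).2
    choose b hbE hbdeg using hex
    have hb0 : ∀ k, b k ≠ 0 := by
      intro k hk0
      have := hbdeg k
      rw [hk0, Polynomial.degree_zero] at this
      exact (by simp : (⊥ : WithBot ℕ) ≠ ((k : ℕ) : WithBot ℕ)) this
    have hbnat : ∀ k, (b k).natDegree = (k : ℕ) := fun k =>
      Polynomial.natDegree_eq_of_degree_eq_some (hbdeg k)
    have hli : LinearIndependent ℂ b := by
      apply li_of_natDegree_inj _ hb0
      intro k l hkl
      simp only [hbnat] at hkl
      exact Subtype.ext hkl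
    set W : Submodule ℂ (Polynomial ℂ) := Submodule.span ℂ (Set.range b) with hW
    set M' : Finset ℕ := (Finset.range (n + 1)).filter (· ∈ M) with hM'
    -- the coefficient map
    set ψ : Polynomial ℂ →ₗ[ℂ] ({x // x ∈ M'} → ℂ) :=
      LinearMap.pi (fun m => (Polynomial.lcoeff ℂ (m : ℕ)).comp (Polynomial.taylor ζ)) with hψ
    have hWU : W ≤ Submodule.span ℂ E := Submodule.span_mono (by
      rintro _ ⟨k, rfl⟩; exact hbE k)
    have hWdeg : W ≤ Polynomial.degreeLE ℂ (n : WithBot ℕ) := by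
      rw [hW, Submodule.span_le]
      rintro _ ⟨k, rfl⟩
      rw [SetLike.mem_coe, Polynomial.mem_degreeLE, hbdeg k]
      exact_mod_cast Nat.le_of_lt_succ (Finset.mem_range.1 (Finset.mem_sdiff.1 k.2).1)
    have hinj : Function.Injective (ψ.comp W.subtype) := by
      rw [← LinearMap.ker_eq_bot, LinearMap.ker_eq_bot']
      rintro ⟨y, hyW⟩ hy0
      apply Subtype.ext
      show y = 0
      by_contra hyne
      -- y ∈ U, so its root multiplicity is in M
      have hmM : rootMultiplicity ζ y ∈ M := ⟨y, hWU hyW, hyne, rfl⟩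
      have hmlen : rootMultiplicity ζ y ≤ n := by
        have h1 : ((X - C ζ) ^ rootMultiplicity ζ y) ∣ y := Polynomial.pow_rootMultiplicity_dvd y ζ
        have h2 := Polynomial.natDegree_le_of_dvd h1 hyne
        rw [Polynomial.natDegree_pow, Polynomial.natDegree_X_sub_C, mul_one] at h2
        have h3 : y.natDegree ≤ n := by
          rw [Polynomial.natDegree_le_iff_degree_le]
          exact Polynomial.mem_degreeLE.1 (hWdeg hyW)
        omega
      have hmem : rootMultiplicity ζ y ∈ M' := Finset.mem_filter.2
        ⟨Finset.mem_range.2 (Nat.lt_succ_of_le hmlen), hmM⟩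
      have h5 : ψ y ⟨_, hmem⟩ = 0 := by
        have h6 : (ψ.comp W.subtype) ⟨y, hyW⟩ = 0 := hy0
        have h7 := congrFun h6 ⟨_, hmem⟩
        simpa using h7
      rw [hψ] at h5
      simp only [LinearMap.pi_apply, LinearMap.comp_apply, Polynomial.lcoeff_apply] at h5
      exact taylor_coeff_rm_ne_zero ζ hyne h5
    -- finrank comparison
    have hfin1 : Module.finrank ℂ W = D.card := by
      rw [hW, finrank_span_eq_card hli, Fintype.card_coe]
    have hfin2 : Module.finrank ℂ W ≤ M'.card := by
      have := LinearMap.finrank_le_finrank_of_injective hinj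
      rwa [Module.finrank_pi, Fintype.card_coe] at this
    -- cardinality chase
    have hDcard : n + 1 - S.card ≤ D.card := by
      rw [hD]
      have := Finset.le_card_sdiff S (Finset.range (n+1))
      rw [Finset.card_range] at this
      omega
    have hM'card : M'.card ≤ n + 1 - Tf.card := by
      have hsub : M' ⊆ Finset.range (n + 1) \ Tf := by
        intro x hx
        rcases Finset.mem_filter.1 hx with ⟨hx1, hx2⟩
        exact Finset.mem_sdiff.2 ⟨hx1, fun hxt => hTf x hxt hx2⟩
      have := Finset.card_le_card hsub
      rwa [Finset.card_sdiff_of_subset hTfsub, Finset.card_range] at this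
    have hTfn : Tf.card ≤ n + 1 := by
      have := Finset.card_le_card hTfsub
      rwa [Finset.card_range] at this
    omega
  -- step 2 : the complement of M is finite
  have hfin : (Mᶜ : Set ℕ).Finite := by
    by_contra hinf
    have hinf' : (Mᶜ : Set ℕ).Infinite := hinf
    obtain ⟨t, hts, htcard⟩ := hinf'.exists_subset_card_eq (S.card + 1)
    have := step1 t (fun x hx => hts hx)
    omega
  obtain ⟨N, hN⟩ := hfin.bddAbove
  refine ⟨N + 1, fun m hm => ?_⟩
  have : m ∈ M := by
    by_contra hmM
    have := hN (Set.mem_compl hmM)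
    omega
  exact this


lemma engine (ζ : ℂ) (A B Cc h : Polynomial ℂ) (S : Finset ℕ)
    (hdeg : ∀ k : ℕ, k ∉ S → ∃ (y : Polynomial ℂ) (lam : ℂ), y.degree = (k : ℕ) ∧
      A * derivative (derivative y) + B * derivative y + Cc * y = C lam * (h * y))
    (hbad : (A ≠ 0 ∧ rootMultiplicity ζ A + 1 ≤ rootMultiplicity ζ h) ∨
            (B ≠ 0 ∧ rootMultiplicity ζ B + 2 ≤ rootMultiplicity ζ h)) :
    False := by
  classical
  set w : Polynomial ℂ := X - C ζ with hw
  have hwne : w ≠ 0 := X_sub_C_ne_zero ζ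
  have hwd : derivative w = 1 := derivative_X_sub_C ζ
  set E : Set (Polynomial ℂ) := {y | ∃ lam : ℂ,
    A * derivative (derivative y) + B * derivative y + Cc * y = C lam * (h * y)} with hE
  set U := Submodule.span ℂ E with hU
  -- T-invariance of U
  have hinv : ∀ y ∈ U, ∃ u ∈ U,
      A * derivative (derivative y) + B * derivative y + Cc * y = h * u := by
    intro y hy
    induction hy using Submodule.span_induction with
    | mem x hx =>
        have hxE := hx
        obtain ⟨lam, hlam⟩ := hxE
        refine ⟨lam • x, Submodule.smul_mem _ _ (Submodule.subset_span hx), ?_⟩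
        rw [hlam, Polynomial.smul_eq_C_mul]; ring
    | zero => exact ⟨0, zero_mem _, by simp⟩
    | add x z hx hz ihx ihz =>
        obtain ⟨u1, hu1, e1⟩ := ihx; obtain ⟨u2, hu2, e2⟩ := ihz
        refine ⟨u1 + u2, add_mem hu1 hu2, ?_⟩
        simp only [derivative_add]
        linear_combination e1 + e2
    | smul aa x hx ihx =>
        obtain ⟨u1, hu1, e1⟩ := ihx
        refine ⟨aa • u1, Submodule.smul_mem _ _ hu1, ?_⟩
        simp only [Polynomial.smul_eq_C_mul, derivative_C_mul]
        linear_combination (C aa) * e1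
  -- notation for root multiplicities
  set a := rootMultiplicity ζ A with ha
  set b := rootMultiplicity ζ B with hb
  set c := rootMultiplicity ζ Cc with hc
  set η := rootMultiplicity ζ h with hη
  have hh : h ≠ 0 := by
    rintro rfl
    rcases hbad with ⟨_, hle⟩ | ⟨_, hle⟩ <;> simp [hη, rootMultiplicity_zero] at hle <;> omega
  -- factorizations
  have fact : ∀ F : Polynomial ℂ, ∃ F₀ : Polynomial ℂ,
      F = w ^ (rootMultiplicity ζ F) * F₀ ∧ (F ≠ 0 → F₀.eval ζ ≠ 0) ∧ (F = 0 → F₀ = 0) := by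
    intro F
    by_cases hF : F = 0
    · exact ⟨0, by simp [hF], fun hc => absurd hF hc, fun _ => rfl⟩
    · refine ⟨F /ₘ w ^ rootMultiplicity ζ F, ?_, fun _ => ?_, fun hc => absurd hc hF⟩
      · rw [hw]; exact (Polynomial.pow_mul_divByMonic_rootMultiplicity_eq F ζ).symm
      · rw [hw]; exact Polynomial.eval_divByMonic_pow_rootMultiplicity_ne_zero ζ hF
  obtain ⟨A₀, hAfac, hAev, hAz⟩ := fact A
  obtain ⟨B₀, hBfac, hBev, hBz⟩ := fact B
  obtain ⟨C₀, hCfac, hCev, hCz⟩ := fact Cc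
  obtain ⟨h₀, hhfac, hhev, _⟩ := fact h
  have hh₀ : h₀.eval ζ ≠ 0 := hhev hh
  -- the leading order e2
  set S3 : Finset ℕ := (if A = 0 then ∅ else {a}) ∪
      ((if B = 0 then ∅ else {b + 1}) ∪ (if Cc = 0 then ∅ else {c + 2})) with hS3
  have hne : S3.Nonempty := by
    rcases hbad with ⟨hA, _⟩ | ⟨hB, _⟩
    · exact ⟨a, by simp [hS3, hA]⟩
    · exact ⟨b + 1, by simp [hS3, hB]⟩
  set e2 := S3.min' hne with he2
  have hboundA : A ≠ 0 → e2 ≤ a := fun hA => Finset.min'_le _ _ (by simp [hS3, hA])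
  have hboundB : B ≠ 0 → e2 ≤ b + 1 := fun hB => Finset.min'_le _ _ (by simp [hS3, hB])
  have hboundC : Cc ≠ 0 → e2 ≤ c + 2 := fun hC => Finset.min'_le _ _ (by simp [hS3, hC])
  have hattain : (A ≠ 0 ∧ e2 = a) ∨ (B ≠ 0 ∧ e2 = b + 1) ∨ (Cc ≠ 0 ∧ e2 = c + 2) := by
    have hmem : e2 ∈ S3 := S3.min'_mem hne
    rw [hS3] at hmem
    simp only [Finset.mem_union] at hmem
    rcases hmem with hm | hm | hm
    · by_cases hA : A = 0
      · simp [hA] at hm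
      · left; refine ⟨hA, ?_⟩; simp [hA] at hm; exact hm
    · by_cases hB : B = 0
      · simp [hB] at hm
      · right; left; refine ⟨hB, ?_⟩; simp [hB] at hm; exact hm
    · by_cases hC : Cc = 0
      · simp [hC] at hm
      · right; right; refine ⟨hC, ?_⟩; simp [hC] at hm; exact hm
  have he2η : e2 + 1 ≤ η := by
    rcases hbad with ⟨hA, hle⟩ | ⟨hB, hle⟩
    · have := hboundA hA; omega
    · have := hboundB hB; omega
  set s := η + 2 - e2 with hs
  have hs3 : 3 ≤ s := by omega
  -- leading coefficients
  set P : ℂ := (w ^ (a - e2) * A₀).eval ζ with hP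
  set Q : ℂ := (w ^ (b + 1 - e2) * B₀).eval ζ with hQ
  set R : ℂ := (w ^ (c + 2 - e2) * C₀).eval ζ with hR
  set Φpoly : Polynomial ℂ := C P * X ^ 2 + C (Q - P) * X + C R with hΦ
  -- factored forms
  have eA : A = w ^ e2 * (w ^ (a - e2) * A₀) := by
    by_cases hA : A = 0
    · rw [hA, hAz hA]; ring
    · rw [← mul_assoc, ← pow_add, Nat.add_sub_cancel' (hboundA hA)]; exact hAfac
  have eB : B * w = w ^ e2 * (w ^ (b + 1 - e2) * B₀) := by
    by_cases hB : B = 0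
    · rw [hB, hBz hB]; ring
    · rw [← mul_assoc, ← pow_add, Nat.add_sub_cancel' (hboundB hB), hBfac]; ring
  have eC : Cc * w ^ 2 = w ^ e2 * (w ^ (c + 2 - e2) * C₀) := by
    by_cases hC : Cc = 0
    · rw [hC, hCz hC]; ring
    · rw [← mul_assoc, ← pow_add, Nat.add_sub_cancel' (hboundC hC), hCfac]; ring
  -- derivative power lemma
  have L1 : ∀ k : ℕ, w * derivative (w ^ k) = C (k : ℂ) * w ^ k := by
    intro k
    rw [derivative_pow, hwd, mul_one]
    cases k with
    | zero => simp
    | succ n => rw [Nat.succ_sub_one]; ring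
  -- the key descent lemma
  have key : ∀ y : Polynomial ℂ, y ∈ U → y ≠ 0 →
      Φpoly.eval ((rootMultiplicity ζ y : ℂ)) ≠ 0 →
      s ≤ rootMultiplicity ζ y ∧
        ∃ u ∈ U, u ≠ 0 ∧ rootMultiplicity ζ u = rootMultiplicity ζ y - s := by
    intro y hyU hyne hΦm
    obtain ⟨u, huU, hueq⟩ := hinv y hyU
    set m := rootMultiplicity ζ y with hm
    obtain ⟨y₀, hyfac, hyev, _⟩ := fact y
    rw [← hm] at hyfac
    have hy₀ : y₀.eval ζ ≠ 0 := hyev hyne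
    set Gy1 : Polynomial ℂ := C (m : ℂ) * y₀ + w * derivative y₀ with hGy1
    set Gy2 : Polynomial ℂ := C (m : ℂ) * (C (m : ℂ) - 1) * y₀ +
        2 * C (m : ℂ) * (w * derivative y₀) + w ^ 2 * derivative (derivative y₀) with hGy2
    have hE1 : w * derivative y = w ^ m * Gy1 := by
      conv_lhs => rw [hyfac]
      rw [derivative_mul, hGy1]
      linear_combination y₀ * L1 m
    have hE2 : w ^ 2 * derivative (derivative y) = w ^ m * Gy2 := by
      have hd := congrArg derivative hE1
      simp only [derivative_mul, hGy1, derivative_add, derivative_C_mul, hwd, derivative_C,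
        zero_mul, mul_zero, add_zero, zero_add, one_mul, mul_one] at hd
      rw [hGy2]
      linear_combination w * hd - hE1 + (C (m:ℂ) * y₀ + w * derivative y₀) * L1 m
    set G : Polynomial ℂ := (w ^ (a - e2) * A₀) * Gy2 + (w ^ (b + 1 - e2) * B₀) * Gy1 +
        (w ^ (c + 2 - e2) * C₀) * y₀ with hG
    have master : w ^ (η + 2) * (h₀ * u) = w ^ (m + e2) * G := by
      have h1 : w ^ (η + 2) * (h₀ * u) = w ^ 2 * (h * u) := by
        rw [hhfac, ← hη, pow_add]; ring
      rw [h1, ← hueq]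
      calc w ^ 2 * (A * derivative (derivative y) + B * derivative y + Cc * y)
          = A * (w ^ 2 * derivative (derivative y)) + (B * w) * (w * derivative y)
              + (Cc * w ^ 2) * y := by ring
        _ = (w ^ e2 * (w ^ (a - e2) * A₀)) * (w ^ m * Gy2)
              + (w ^ e2 * (w ^ (b + 1 - e2) * B₀)) * (w ^ m * Gy1)
              + (w ^ e2 * (w ^ (c + 2 - e2) * C₀)) * (w ^ m * y₀) := by
            rw [← eA, ← eB, ← eC, hE2, hE1]
            conv_lhs => rw [hyfac]
        _ = w ^ (m + e2) * G := by rw [pow_add, hG]; ring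
    have hGev : G.eval ζ = Φpoly.eval (m : ℂ) * y₀.eval ζ := by
      have hwev : w.eval ζ = 0 := by rw [hw]; simp
      rw [hG, hGy1, hGy2, hΦ, hP, hQ, hR]
      simp only [eval_add, eval_mul, eval_pow, eval_sub, eval_C, eval_X, eval_one,
        eval_ofNat, hwev]
      ring
    have hGevne : G.eval ζ ≠ 0 := by rw [hGev]; exact mul_ne_zero hΦm hy₀
    have hGne : G ≠ 0 := fun h0 => hGevne (by rw [h0]; simp)
    have hune : u ≠ 0 := by
      rintro rfl
      rw [mul_zero, mul_zero] at master
      exact (mul_ne_zero (pow_ne_zero _ hwne) hGne) master.symm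
    have hh0ne : h₀ ≠ 0 := fun h0 => hh₀ (by rw [h0]; simp)
    have hne1 : w ^ (η + 2) * (h₀ * u) ≠ 0 :=
      mul_ne_zero (pow_ne_zero _ hwne) (mul_ne_zero hh0ne hune)
    have hne2 : w ^ (m + e2) * G ≠ 0 := mul_ne_zero (pow_ne_zero _ hwne) hGne
    have hwpow : ∀ k : ℕ, rootMultiplicity ζ (w ^ k) = k := by
      intro k; rw [hw]; exact rootMultiplicity_X_sub_C_pow ζ k
    have hrm := congrArg (rootMultiplicity ζ) master
    rw [rootMultiplicity_mul hne1, rootMultiplicity_mul hne2,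
      rootMultiplicity_mul (mul_ne_zero hh0ne hune), hwpow, hwpow] at hrm
    have hrmh₀ : rootMultiplicity ζ h₀ = 0 := rootMultiplicity_eq_zero hh₀
    have hrmG : rootMultiplicity ζ G = 0 := rootMultiplicity_eq_zero hGevne
    rw [hrmh₀, hrmG] at hrm
    exact ⟨by omega, u, huU, hune, by omega⟩
  -- the quadratic Φ is nonzero
  have hPQR : P ≠ 0 ∨ Q ≠ 0 ∨ R ≠ 0 := by
    rcases hattain with ⟨hA, he⟩ | ⟨hB, he⟩ | ⟨hC, he⟩
    · left; rw [hP, he]; simpa [Nat.sub_self] using hAev hA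
    · right; left; rw [hQ, he]; simpa [Nat.sub_self] using hBev hB
    · right; right; rw [hR, he]; simpa [Nat.sub_self] using hCev hC
  have hΦne : Φpoly ≠ 0 := by
    intro h0
    have e0 := congrArg (Polynomial.eval (0 : ℂ)) h0
    have e1 := congrArg (Polynomial.eval (1 : ℂ)) h0
    have e4 := congrArg (Polynomial.eval (2 : ℂ)) h0
    simp only [hΦ, eval_add, eval_mul, eval_pow, eval_C, eval_X, eval_zero] at e0 e1 e4
    rcases hPQR with hne' | hne' | hne'
    · exact hne' (by linear_combination e4/(2:ℂ) - e1 + e0/(2:ℂ))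
    · exact hne' (by linear_combination e1 - e0)
    · exact hne' (by linear_combination e0)
  have hdeg2 : Φpoly.natDegree ≤ 2 := by
    rw [hΦ]
    refine le_trans (natDegree_add_le _ _) ?_
    rw [max_le_iff]
    constructor
    · refine le_trans (natDegree_add_le _ _) ?_
      rw [max_le_iff]
      constructor
      · exact le_trans (natDegree_C_mul_le _ _) (by simp)
      · exact le_trans (natDegree_C_mul_le _ _) (by simp [natDegree_X])
    · simp [natDegree_C]
  have hcard : Φpoly.roots.toFinset.card ≤ 2 :=
    le_trans (Multiset.toFinset_card_le _) (le_trans (Polynomial.card_roots' _) hdeg2)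
  set RS : Finset ℕ := Φpoly.roots.toFinset.image
      (fun z => if hz : ∃ n : ℕ, (n : ℂ) = z then hz.choose % s else 0) with hRS
  have hRScard : RS.card ≤ 2 := le_trans (Finset.card_image_le) hcard
  have hT : ((Finset.range s) \ RS).Nonempty := by
    have h1 := Finset.le_card_sdiff RS (Finset.range s)
    rw [Finset.card_range] at h1
    exact Finset.card_pos.1 (by omega)
  obtain ⟨t, ht⟩ := hT
  obtain ⟨hts, htRS⟩ := Finset.mem_sdiff.1 ht
  have hts' : t < s := Finset.mem_range.1 hts
  have hroot : ∀ m : ℕ, m % s = t → Φpoly.eval (m : ℂ) ≠ 0 := by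
    intro m hmod hev
    apply htRS
    rw [hRS]
    apply Finset.mem_image.2
    refine ⟨(m : ℂ), Multiset.mem_toFinset.2 ((mem_roots hΦne).2 hev), ?_⟩
    have hex : ∃ n : ℕ, (n : ℂ) = ((m : ℕ) : ℂ) := ⟨m, rfl⟩
    rw [dif_pos hex]
    have hsp := hex.choose_spec
    have hcn : hex.choose = m := Nat.cast_injective hsp
    rw [hcn, hmod]
  have desc : ∀ m : ℕ, (∃ y ∈ U, y ≠ 0 ∧ rootMultiplicity ζ y = m) → m % s = t → False := by
    intro m
    induction m using Nat.strong_induction_on with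
    | _ m ih =>
      intro hm hmod
      obtain ⟨y, hyU, hyne, hym⟩ := hm
      obtain ⟨hsm, u, huU, hune, hurm⟩ := key y hyU hyne (by rw [hym]; exact hroot m hmod)
      rw [hym] at hsm hurm
      apply ih (m - s) (by omega) ⟨u, huU, hune, hurm⟩
      have hms : m - s + s = m := by omega
      rw [← hms] at hmod
      rwa [Nat.add_mod_right] at hmod
  obtain ⟨N, hN⟩ := orderSet_cofinite ζ E S (fun k hk => by
    obtain ⟨y, lam, hdy, heq⟩ := hdeg k hk
    exact ⟨y, ⟨lam, heq⟩, hdy⟩)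
  have hge : N ≤ t + (N + 1) * s := by
    have h1 : N + 1 ≤ (N + 1) * s := Nat.le_mul_of_pos_right _ (by omega)
    omega
  exact desc (t + (N + 1) * s) (hN _ hge)
    (by rw [Nat.add_mul_mod_self_right]; exact Nat.mod_eq_of_lt hts')


lemma rderiv_algebraMap (y : Polynomial ℂ) :
    rderiv (algebraMap (Polynomial ℂ) (RatFunc ℂ) y) =
      algebraMap (Polynomial ℂ) (RatFunc ℂ) (derivative y) := by
  unfold rderiv
  rw [RatFunc.num_algebraMap, RatFunc.denom_algebraMap]
  simp


end Stmt14Aux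

open Stmt14Aux in
/-- If `T = pD² + qD + r` is exceptional, then `p` is a polynomial and every
pole of `q` is simple (the denominator of `q` has only simple roots). -/
theorem stmt14 (p q r : RatFunc ℂ) (hT : IsExceptional p q r) :
    (∃ P : Polynomial ℂ, p = algebraMap (Polynomial ℂ) (RatFunc ℂ) P) ∧
    (∀ ζ : ℂ, rootMultiplicity ζ q.denom ≤ 1) := by
  obtain ⟨S, hS⟩ := hT
  set A := p.num * (q.denom * r.denom) with hA
  set B := q.num * (p.denom * r.denom) with hB
  set Cc := r.num * (p.denom * q.denom) with hC
  set h := p.denom * (q.denom * r.denom) with hh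
  have hclear : ∀ f : RatFunc ℂ, f * algebraMap (Polynomial ℂ) (RatFunc ℂ) f.denom
      = algebraMap (Polynomial ℂ) (RatFunc ℂ) f.num := by
    intro f
    rw [← eq_div_iff (RatFunc.algebraMap_ne_zero f.denom_ne_zero)]
    exact (RatFunc.num_div_denom f).symm
  have key_p : algebraMap (Polynomial ℂ) (RatFunc ℂ) h * p
      = algebraMap (Polynomial ℂ) (RatFunc ℂ) A := by
    rw [hh, hA, map_mul, map_mul, map_mul, map_mul, ← hclear p]; ring
  have key_q : algebraMap (Polynomial ℂ) (RatFunc ℂ) h * q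
      = algebraMap (Polynomial ℂ) (RatFunc ℂ) B := by
    rw [hh, hB, map_mul, map_mul, map_mul, map_mul, ← hclear q]; ring
  have key_r : algebraMap (Polynomial ℂ) (RatFunc ℂ) h * r
      = algebraMap (Polynomial ℂ) (RatFunc ℂ) Cc := by
    rw [hh, hC, map_mul, map_mul, map_mul, map_mul, ← hclear r]; ring
  have hdeg : ∀ k : ℕ, k ∉ S → ∃ (y : Polynomial ℂ) (lam : ℂ), y.degree = (k : ℕ) ∧
      A * derivative (derivative y) + B * derivative y + Cc * y
        = Polynomial.C lam * (h * y) := by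
    intro k hk
    obtain ⟨y, lam, hdy, heq⟩ := (hS k).1 hk
    refine ⟨y, lam, hdy, ?_⟩
    simp only [Tapp, rderiv_algebraMap] at heq
    apply RatFunc.algebraMap_injective
    simp only [map_add, map_mul, RatFunc.algebraMap_C]
    linear_combination (algebraMap (Polynomial ℂ) (RatFunc ℂ) h) * heq
      - key_p * (algebraMap (Polynomial ℂ) (RatFunc ℂ) (derivative (derivative y)))
      - key_q * (algebraMap (Polynomial ℂ) (RatFunc ℂ) (derivative y))
      - key_r * (algebraMap (Polynomial ℂ) (RatFunc ℂ) y)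
  have num_eval_ne : ∀ (f : RatFunc ℂ) (ζ : ℂ), f.denom.IsRoot ζ → f.num.eval ζ ≠ 0 := by
    intro f ζ hroot h0
    obtain ⟨u, v, huv⟩ := f.isCoprime_num_denom
    have h2 := congrArg (Polynomial.eval ζ) huv
    rw [Polynomial.IsRoot] at hroot
    simp [h0, hroot] at h2
  constructor
  · by_cases hp0 : p = 0
    · exact ⟨0, by simp [hp0]⟩
    · have hnoroot : ∀ ζ : ℂ, ¬ p.denom.IsRoot ζ := by
        intro ζ hroot
        apply engine ζ A B Cc h S hdeg
        left
        have hAne : A ≠ 0 := mul_ne_zero (RatFunc.num_ne_zero hp0)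
          (mul_ne_zero q.denom_ne_zero r.denom_ne_zero)
        refine ⟨hAne, ?_⟩
        have hnum : rootMultiplicity ζ p.num = 0 :=
          rootMultiplicity_eq_zero (num_eval_ne p ζ hroot)
        have hqr : (q.denom * r.denom : Polynomial ℂ) ≠ 0 :=
          mul_ne_zero q.denom_ne_zero r.denom_ne_zero
        have h1 : rootMultiplicity ζ A
            = rootMultiplicity ζ (q.denom * r.denom) := by
          rw [hA, rootMultiplicity_mul (mul_ne_zero (RatFunc.num_ne_zero hp0) hqr),
            hnum, zero_add]
        have h2 : rootMultiplicity ζ h = rootMultiplicity ζ p.denom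
            + rootMultiplicity ζ (q.denom * r.denom) := by
          rw [hh, rootMultiplicity_mul (mul_ne_zero p.denom_ne_zero hqr)]
        have h3 : 0 < rootMultiplicity ζ p.denom :=
          (rootMultiplicity_pos p.denom_ne_zero).2 hroot
        omega
      have hd1 : p.denom = 1 := by
        by_contra hne1
        have hmon := p.monic_denom
        have hnd : p.denom.natDegree ≠ 0 :=
          fun h0 => hne1 (hmon.natDegree_eq_zero.1 h0)
        have hdne : p.denom.degree ≠ 0 := by
          rw [Polynomial.degree_eq_natDegree p.denom_ne_zero]
          exact_mod_cast hnd
        obtain ⟨z, hz⟩ := Complex.isAlgClosed.exists_root _ hdne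
        exact hnoroot z hz
      refine ⟨p.num, ?_⟩
      conv_lhs => rw [← RatFunc.num_div_denom p]
      rw [hd1, map_one, div_one]
  · intro ζ
    by_cases hq0 : q = 0
    · rw [hq0, RatFunc.denom_zero]
      have h1 : rootMultiplicity ζ (1 : Polynomial ℂ) = 0 := by
        rw [← Polynomial.C_1]; exact rootMultiplicity_C 1 ζ
      omega
    · by_contra hgt
      push_neg at hgt
      have hroot : q.denom.IsRoot ζ := by
        apply (rootMultiplicity_pos q.denom_ne_zero).1
        omega
      apply engine ζ A B Cc h S hdeg
      right
      have hBne : B ≠ 0 := mul_ne_zero (RatFunc.num_ne_zero hq0)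
        (mul_ne_zero p.denom_ne_zero r.denom_ne_zero)
      refine ⟨hBne, ?_⟩
      have hnum : rootMultiplicity ζ q.num = 0 :=
        rootMultiplicity_eq_zero (num_eval_ne q ζ hroot)
      have hpr : (p.denom * r.denom : Polynomial ℂ) ≠ 0 :=
        mul_ne_zero p.denom_ne_zero r.denom_ne_zero
      have h1 : rootMultiplicity ζ B = rootMultiplicity ζ (p.denom * r.denom) := by
        rw [hB, rootMultiplicity_mul (mul_ne_zero (RatFunc.num_ne_zero hq0) hpr),
          hnum, zero_add]
      have h2 : rootMultiplicity ζ h = rootMultiplicity ζ q.denom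
          + rootMultiplicity ζ (p.denom * r.denom) := by
        rw [hh]
        rw [show p.denom * (q.denom * r.denom) = q.denom * (p.denom * r.denom) by ring]
        rw [rootMultiplicity_mul (mul_ne_zero q.denom_ne_zero hpr)]
      omega
end

section
/- If T = pD² + qD + r is an exceptional operator with rational coefficients, then deg p ≤ 2, deg q ≤ 1, and deg r ≤ 0, where the degree of a rational function is the degree of its numerator minus the degree of its denominator. -/
open Polynomial

lemma rderiv_algebraMap (y : Polynomial ℂ) :
    rderiv (algebraMap (Polynomial ℂ) (RatFunc ℂ) y)
      = algebraMap (Polynomial ℂ) (RatFunc ℂ) (derivative y) := by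
  unfold rderiv
  rw [RatFunc.num_algebraMap, RatFunc.denom_algebraMap]
  simp

lemma keyEq (p q r : RatFunc ℂ) (y : Polynomial ℂ) (lam : ℂ)
    (h : Tapp p q r (algebraMap (Polynomial ℂ) (RatFunc ℂ) y)
      = RatFunc.C lam * algebraMap (Polynomial ℂ) (RatFunc ℂ) y) :
    p.num * (q.denom * r.denom) * derivative (derivative y)
      + q.num * (p.denom * r.denom) * derivative y
      + r.num * (p.denom * q.denom) * y
      = Polynomial.C lam * (p.denom * (q.denom * r.denom) * y) := by
  apply RatFunc.algebraMap_injective ℂ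
  have hp : p * algebraMap (Polynomial ℂ) (RatFunc ℂ) p.denom
      = algebraMap (Polynomial ℂ) (RatFunc ℂ) p.num := by
    have hp' := RatFunc.num_div_denom p
    rw [div_eq_iff (RatFunc.algebraMap_ne_zero p.denom_ne_zero)] at hp'
    exact hp'.symm
  have hq : q * algebraMap (Polynomial ℂ) (RatFunc ℂ) q.denom
      = algebraMap (Polynomial ℂ) (RatFunc ℂ) q.num := by
    have hq' := RatFunc.num_div_denom q
    rw [div_eq_iff (RatFunc.algebraMap_ne_zero q.denom_ne_zero)] at hq'
    exact hq'.symm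
  have hr : r * algebraMap (Polynomial ℂ) (RatFunc ℂ) r.denom
      = algebraMap (Polynomial ℂ) (RatFunc ℂ) r.num := by
    have hr' := RatFunc.num_div_denom r
    rw [div_eq_iff (RatFunc.algebraMap_ne_zero r.denom_ne_zero)] at hr'
    exact hr'.symm
  rw [Tapp, rderiv_algebraMap, rderiv_algebraMap, ← RatFunc.algebraMap_C (K := ℂ)] at h
  set A := algebraMap (Polynomial ℂ) (RatFunc ℂ)
  simp only [map_add, map_mul]
  linear_combination (A p.denom * A q.denom * A r.denom) * h
    - (A q.denom * A r.denom * A (derivative (derivative y))) * hp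
    - (A p.denom * A r.denom * A (derivative y)) * hq
    - (A p.denom * A q.denom * A y) * hr

lemma coeff_eq (a b c s y : Polynomial ℂ) (lam : ℂ) (N k : ℕ)
    (heq : a * derivative (derivative y) + b * derivative y + c * y
      = Polynomial.C lam * (s * y))
    (hk : 2 ≤ k) (hy : y.natDegree = k)
    (ha : a.natDegree ≤ N + 2) (hb : b.natDegree ≤ N + 1) (hc : c.natDegree ≤ N)
    (hs : s.natDegree < N) (hy0 : y ≠ 0) :
    a.coeff (N+2) * ((k:ℂ) * ((k:ℂ)-1)) + b.coeff (N+1) * k + c.coeff N = 0 := by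
  have hy1 : (derivative y).natDegree ≤ k - 1 := by
    simpa [hy] using natDegree_derivative_le y
  have hy2 : (derivative (derivative y)).natDegree ≤ k - 2 := by
    have := natDegree_derivative_le (derivative y)
    omega
  have hck : y.coeff k ≠ 0 := by
    rw [← hy]
    exact mt leadingCoeff_eq_zero.mp hy0
  have hcoeff := congrArg (fun z => Polynomial.coeff z (k + N)) heq
  simp only [coeff_add] at hcoeff
  rw [show k + N = (N+2) + (k-2) by omega, coeff_mul_add_eq_of_natDegree_le ha hy2] at hcoeff
  rw [show (N+2) + (k-2) = (N+1) + (k-1) by omega, coeff_mul_add_eq_of_natDegree_le hb hy1] at hcoeff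
  rw [show (N+1) + (k-1) = N + k by omega, coeff_mul_add_eq_of_natDegree_le hc (le_of_eq hy)] at hcoeff
  have hrhs : (Polynomial.C lam * (s * y)).coeff (N + k) = 0 := by
    rw [coeff_C_mul]
    rw [coeff_eq_zero_of_natDegree_lt]
    · ring
    · calc (s * y).natDegree ≤ s.natDegree + y.natDegree := natDegree_mul_le
        _ < N + k := by omega
  rw [hrhs] at hcoeff
  have hd2 : (derivative (derivative y)).coeff (k-2) = y.coeff k * ((k:ℂ) * ((k:ℂ)-1)) := by
    rw [coeff_derivative, show (k-2) + 1 = k - 1 by omega, coeff_derivative,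
      show (k-1) + 1 = k by omega]
    have h1 : ((k - 1 : ℕ) : ℂ) = (k : ℂ) - 1 := by
      push_cast [Nat.cast_sub (show 1 ≤ k by omega)]; ring
    have h2 : ((k - 2 : ℕ) : ℂ) = (k : ℂ) - 2 := by
      push_cast [Nat.cast_sub hk]; ring
    rw [h1, h2]; ring
  have hd1 : (derivative y).coeff (k-1) = y.coeff k * (k:ℂ) := by
    rw [coeff_derivative, show (k-1) + 1 = k by omega]
    have h1 : ((k - 1 : ℕ) : ℂ) = (k : ℂ) - 1 := by
      push_cast [Nat.cast_sub (show 1 ≤ k by omega)]; ring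
    rw [h1]; ring
  rw [hd2, hd1] at hcoeff
  apply mul_right_cancel₀ hck
  linear_combination hcoeff

lemma degBound (p q r : RatFunc ℂ) (hT : IsExceptional p q r) :
    (p.num * (q.denom * r.denom)).natDegree
        ≤ (p.denom * (q.denom * r.denom)).natDegree + 2 ∧
      (q.num * (p.denom * r.denom)).natDegree
        ≤ (p.denom * (q.denom * r.denom)).natDegree + 1 ∧
      (r.num * (p.denom * q.denom)).natDegree
        ≤ (p.denom * (q.denom * r.denom)).natDegree := by
  obtain ⟨S, hS⟩ := hT
  set a := p.num * (q.denom * r.denom) with hadef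
  set b := q.num * (p.denom * r.denom) with hbdef
  set c := r.num * (p.denom * q.denom) with hcdef
  set s := p.denom * (q.denom * r.denom) with hsdef
  by_contra hcon
  set M := max (max a.natDegree (b.natDegree + 1)) (c.natDegree + 2) with hMdef
  have hMa : a.natDegree ≤ M := le_trans (le_max_left _ _) (le_max_left _ _)
  have hMb : b.natDegree + 1 ≤ M := le_trans (le_max_right _ _) (le_max_left _ _)
  have hMc : c.natDegree + 2 ≤ M := le_max_right _ _
  have hach : M = a.natDegree ∨ M = b.natDegree + 1 ∨ M = c.natDegree + 2 := by
    rcases max_choice (max a.natDegree (b.natDegree + 1)) (c.natDegree + 2) with h | h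
    · rcases max_choice a.natDegree (b.natDegree + 1) with h' | h'
      · exact Or.inl (by omega)
      · exact Or.inr (Or.inl (by omega))
    · exact Or.inr (Or.inr (by omega))
  have hM : s.natDegree + 2 < M := by
    by_contra h'
    exact hcon ⟨by omega, by omega, by omega⟩
  set N := M - 2 with hNdef
  have hN2 : N + 2 = M := by omega
  have hsN : s.natDegree < N := by omega
  -- the three top coefficients
  set A2 := a.coeff (N + 2) with hA2def
  set B1 := b.coeff (N + 1) with hB1def
  set C0 := c.coeff N with hC0def
  set P := Polynomial.C A2 * (X * X - X) + Polynomial.C B1 * X + Polynomial.C C0 with hPdef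
  set T := {k : ℕ | k ∉ S ∧ 2 ≤ k} with hTdef
  have hTinf : T.Infinite := by
    have : ((↑S ∪ Set.Iio 2 : Set ℕ))ᶜ ⊆ T := by
      intro k hk
      simp only [Set.mem_compl_iff, Set.mem_union, Set.mem_Iio, not_or, not_lt,
        Finset.mem_coe] at hk
      exact ⟨hk.1, hk.2⟩
    exact Set.Infinite.mono this
      (Set.Finite.infinite_compl ((S.finite_toSet).union (Set.finite_Iio 2)))
  have hroot : ∀ k ∈ T, P.IsRoot (k : ℂ) := by
    intro k hk
    obtain ⟨hkS, hk2⟩ := hk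
    obtain ⟨y, lam, hydeg, hTy⟩ := (hS k).mp hkS
    have hy0 : y ≠ 0 := by
      intro h; rw [h] at hydeg; simp at hydeg
    have hynd : y.natDegree = k := natDegree_eq_of_degree_eq_some hydeg
    have hkey := keyEq p q r y lam hTy
    have := coeff_eq a b c s y lam N k (by rw [hadef, hbdef, hcdef, hsdef]; exact hkey)
      hk2 hynd (by omega) (by omega) (by omega) hsN hy0
    simp only [IsRoot, hPdef, eval_add, eval_mul, eval_sub, eval_C, eval_X]
    linear_combination this
  have hP0 : P = 0 := by
    by_contra hP
    have himg : Set.Infinite ((fun k : ℕ => (k : ℂ)) '' T) :=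
      hTinf.image (Set.injOn_of_injective (fun x y h => by exact_mod_cast h))
    refine himg (Set.Finite.subset (P.finite_setOf_isRoot hP) ?_)
    rintro _ ⟨k, hk, rfl⟩
    exact hroot k hk
  have e0 := congrArg (Polynomial.eval (0:ℂ)) hP0
  have e1 := congrArg (Polynomial.eval (1:ℂ)) hP0
  have e2 := congrArg (Polynomial.eval (2:ℂ)) hP0
  simp only [hPdef, eval_add, eval_mul, eval_sub, eval_C, eval_X, eval_zero] at e0 e1 e2
  have hC0 : C0 = 0 := by linear_combination e0
  have hB1 : B1 = 0 := by linear_combination e1 - e0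
  have hA2 : A2 = 0 := by linear_combination (e2 - e0) / 2 - e1 + e0
  rcases hach with h | h | h
  · have ha0 : a ≠ 0 := by
      intro h'; rw [h'] at h; simp at h; omega
    have : a.coeff (N + 2) ≠ 0 := by
      rw [show N + 2 = a.natDegree by omega]
      exact mt leadingCoeff_eq_zero.mp ha0
    exact this hA2
  · have hb0 : b ≠ 0 := by
      intro h'; rw [h'] at h; simp at h; omega
    have : b.coeff (N + 1) ≠ 0 := by
      rw [show N + 1 = b.natDegree by omega]
      exact mt leadingCoeff_eq_zero.mp hb0
    exact this hB1
  · have hc0 : c ≠ 0 := by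
      intro h'; rw [h'] at h; simp at h; omega
    have : c.coeff N ≠ 0 := by
      rw [show N = c.natDegree by omega]
      exact mt leadingCoeff_eq_zero.mp hc0
    exact this hC0

/-- If `T = pD² + qD + r` is exceptional, then `deg p ≤ 2`, `deg q ≤ 1` and
`deg r ≤ 0`, where the degree of a rational function is the numerator degree minus the
denominator degree (`RatFunc.intDegree`). -/
theorem stmt15 (p q r : RatFunc ℂ) (hT : IsExceptional p q r) :
    p.intDegree ≤ 2 ∧ q.intDegree ≤ 1 ∧ r.intDegree ≤ 0 := by
  obtain ⟨h1, h2, h3⟩ := degBound p q r hT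
  have hpd := p.denom_ne_zero
  have hqd := q.denom_ne_zero
  have hrd := r.denom_ne_zero
  have hs : (p.denom * (q.denom * r.denom)).natDegree
      = p.denom.natDegree + (q.denom.natDegree + r.denom.natDegree) := by
    rw [natDegree_mul hpd (mul_ne_zero hqd hrd), natDegree_mul hqd hrd]
  refine ⟨?_, ?_, ?_⟩
  · by_cases hp : p = 0
    · simp [hp, RatFunc.intDegree_zero]
    · have hn : p.num ≠ 0 := RatFunc.num_ne_zero hp
      rw [natDegree_mul hn (mul_ne_zero hqd hrd), natDegree_mul hqd hrd, hs] at h1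
      rw [RatFunc.intDegree]
      omega
  · by_cases hq : q = 0
    · simp [hq, RatFunc.intDegree_zero]
    · have hn : q.num ≠ 0 := RatFunc.num_ne_zero hq
      rw [natDegree_mul hn (mul_ne_zero hpd hrd), natDegree_mul hpd hrd, hs] at h2
      rw [RatFunc.intDegree]
      omega
  · by_cases hr : r = 0
    · simp [hr, RatFunc.intDegree_zero]
    · have hn : r.num ≠ 0 := RatFunc.num_ne_zero hr
      rw [natDegree_mul hn (mul_ne_zero hpd hqd), natDegree_mul hpd hqd, hs] at h3
      rw [RatFunc.intDegree]
      omega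
end

section
/- Let T = pD² + qD + r be a second-order operator with rational coefficients whose first-order coefficient has the form q = p'/2 + s − 2pη'/η and zero-order coefficient r = p η''/η + (p'/2 − s)η'/η + 2p(μ''/μ − (μ'/μ)²) + p'μ'/μ, for some s ∈ ℂ[z]_{≤1} and nonzero rational η, μ. Then for any nonzero rational σ, the gauge-transformed operator T̃ = σTσ⁻¹ has coefficients of the same form with η replaced by ση and μ replaced by σ⁻¹μ. -/
open Polynomial

local notation "L" => algebraMap (Polynomial ℂ) (RatFunc ℂ)

lemma LinjNe {b : Polynomial ℂ} (hb : b ≠ 0) : (L b) ≠ 0 :=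
  (map_ne_zero_iff _ (RatFunc.algebraMap_injective ℂ)).mpr hb

lemma rderiv_rep (f : RatFunc ℂ) (a b : Polynomial ℂ) (hb : b ≠ 0)
    (hf : f = L a / L b) :
    rderiv f = (L (derivative a) * L b - L a * L (derivative b)) / (L b) ^ 2 := by
  have hLb : (L b) ≠ 0 := LinjNe hb
  have hLd : (L f.denom) ≠ 0 := LinjNe (RatFunc.denom_ne_zero f)
  have h0 : L f.num / L f.denom = L a / L b := by rw [RatFunc.num_div_denom]; exact hf
  rw [div_eq_div_iff hLd hLb] at h0
  have key : f.num * b = a * f.denom := by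
    apply RatFunc.algebraMap_injective ℂ
    simpa [map_mul] using h0
  have key' : derivative f.num * b + f.num * derivative b
      = derivative a * f.denom + a * derivative f.denom := by
    have := congrArg derivative key
    simpa [derivative_mul] using this
  have P : (derivative f.num * f.denom - f.num * derivative f.denom) * b ^ 2
      = (derivative a * b - a * derivative b) * f.denom ^ 2 := by
    linear_combination (b * f.denom) * key'
      - (b * derivative f.denom + derivative b * f.denom) * key
  rw [rderiv, div_eq_div_iff (pow_ne_zero 2 hLd) (pow_ne_zero 2 hLb)]
  simp only [← map_pow, ← map_mul, ← map_sub]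
  exact congrArg _ P

lemma exists_rep (f : RatFunc ℂ) : ∃ n d : Polynomial ℂ, d ≠ 0 ∧ f = L n / L d :=
  ⟨f.num, f.denom, RatFunc.denom_ne_zero f, (RatFunc.num_div_denom f).symm⟩

lemma rderiv_algebraMap_s18 (a : Polynomial ℂ) : rderiv (L a) = L (derivative a) := by
  rw [rderiv_rep (L a) a 1 one_ne_zero (by simp)]
  simp

lemma rderiv_one : rderiv (1 : RatFunc ℂ) = 0 := by
  simpa using rderiv_algebraMap_s18 1

lemma rderiv_mul (f g : RatFunc ℂ) :
    rderiv (f * g) = rderiv f * g + f * rderiv g := by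
  obtain ⟨a, b, hb, rfl⟩ := exists_rep f
  obtain ⟨c, d, hd, rfl⟩ := exists_rep g
  have hLb : (L b) ≠ 0 := LinjNe hb
  have hLd : (L d) ≠ 0 := LinjNe hd
  have h1 : L a / L b * (L c / L d) = L (a * c) / L (b * d) := by
    rw [map_mul, map_mul]; field_simp
  rw [h1, rderiv_rep _ _ _ (mul_ne_zero hb hd) rfl,
      rderiv_rep _ a b hb rfl, rderiv_rep _ c d hd rfl]
  simp only [derivative_mul, map_mul, map_add]
  field_simp
  ring

lemma rderiv_add (f g : RatFunc ℂ) :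
    rderiv (f + g) = rderiv f + rderiv g := by
  obtain ⟨a, b, hb, rfl⟩ := exists_rep f
  obtain ⟨c, d, hd, rfl⟩ := exists_rep g
  have hLb : (L b) ≠ 0 := LinjNe hb
  have hLd : (L d) ≠ 0 := LinjNe hd
  have h1 : L a / L b + L c / L d = L (a * d + c * b) / L (b * d) := by
    rw [map_add, map_mul, map_mul, map_mul]; field_simp
  rw [h1, rderiv_rep _ _ _ (mul_ne_zero hb hd) rfl,
      rderiv_rep _ a b hb rfl, rderiv_rep _ c d hd rfl]
  simp only [derivative_mul, derivative_add, map_mul, map_add]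
  field_simp
  ring

lemma rderiv_inv (f : RatFunc ℂ) (hf : f ≠ 0) :
    rderiv f⁻¹ = -rderiv f * f⁻¹ * f⁻¹ := by
  have h2 := congrArg rderiv (mul_inv_cancel₀ hf)
  rw [rderiv_mul, rderiv_one] at h2
  have h3 : rderiv f⁻¹ = f⁻¹ * f * rderiv f⁻¹ := by rw [inv_mul_cancel₀ hf, one_mul]
  rw [h3]
  linear_combination f⁻¹ * h2

lemma rderiv_zero : rderiv (0 : RatFunc ℂ) = 0 := by
  simpa using rderiv_algebraMap_s18 0

lemma rderiv_neg (f : RatFunc ℂ) : rderiv (-f) = - rderiv f := by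
  have h := rderiv_add f (-f)
  simp only [add_neg_cancel, rderiv_zero] at h
  linear_combination -h

lemma rderiv_X : rderiv (algebraMap (Polynomial ℂ) (RatFunc ℂ) X) = 1 := by
  rw [rderiv_algebraMap_s18]; simp

instance : CharZero (RatFunc ℂ) :=
  charZero_of_injective_algebraMap (RatFunc.algebraMap_injective ℂ)

set_option maxHeartbeats 2000000 in
/-- Suppose `T = pD² + qD + r` has coefficients of the form
`q = p'/2 + s − 2pη'/η`, `r = pη''/η + (p'/2 − s)η'/η + 2p(μ''/μ − (μ'/μ)²) + p'μ'/μ`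
for some `s ∈ ℂ[z]_{≤1}`, `p ∈ ℂ[z]_{≤2}` and nonzero rational `η, μ`.  Then for any
nonzero rational `σ`, the gauge-transformed operator `T̃ = σTσ⁻¹` (with coefficients
`p, q̃, r̃`) has coefficients of the same form, with `η` replaced by `ση` and `μ` by
`σ⁻¹μ`. -/
theorem stmt18 (p : RatFunc ℂ) (s : Polynomial ℂ) (η μ σ q r qt rt : RatFunc ℂ)
    (hs : s.degree ≤ 1)
    (hp2 : ∃ P : Polynomial ℂ, P.degree ≤ 2 ∧ p = algebraMap (Polynomial ℂ) (RatFunc ℂ) P)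
    (hη : η ≠ 0) (hμ : μ ≠ 0) (hσ : σ ≠ 0)
    (hq : q = rderiv p / 2 + algebraMap (Polynomial ℂ) (RatFunc ℂ) s
        - 2 * p * rderiv η / η)
    (hr : r = p * rderiv (rderiv η) / η
        + (rderiv p / 2 - algebraMap (Polynomial ℂ) (RatFunc ℂ) s) * (rderiv η / η)
        + 2 * p * (rderiv (rderiv μ) / μ - (rderiv μ / μ) ^ 2) + rderiv p * (rderiv μ / μ))
    (hgauge : ∀ y : RatFunc ℂ,
      p * rderiv (rderiv y) + qt * rderiv y + rt * y =
        σ * (p * rderiv (rderiv (σ⁻¹ * y)) + q * rderiv (σ⁻¹ * y) + r * (σ⁻¹ * y))) :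
    qt = rderiv p / 2 + algebraMap (Polynomial ℂ) (RatFunc ℂ) s
        - 2 * p * rderiv (σ * η) / (σ * η) ∧
    rt = p * rderiv (rderiv (σ * η)) / (σ * η)
        + (rderiv p / 2 - algebraMap (Polynomial ℂ) (RatFunc ℂ) s) *
            (rderiv (σ * η) / (σ * η))
        + 2 * p * (rderiv (rderiv (σ⁻¹ * μ)) / (σ⁻¹ * μ) - (rderiv (σ⁻¹ * μ) / (σ⁻¹ * μ)) ^ 2)
        + rderiv p * (rderiv (σ⁻¹ * μ) / (σ⁻¹ * μ)) := by
  have eqA := hgauge σ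
  rw [inv_mul_cancel₀ hσ] at eqA
  simp only [rderiv_one, rderiv_zero, mul_zero, mul_one, zero_add, add_zero, zero_mul] at eqA
  -- eqA : p * rderiv (rderiv σ) + qt * rderiv σ + rt * σ = σ * r
  have eqB := hgauge (σ * algebraMap (Polynomial ℂ) (RatFunc ℂ) X)
  have ecancel : σ⁻¹ * (σ * algebraMap (Polynomial ℂ) (RatFunc ℂ) X)
      = algebraMap (Polynomial ℂ) (RatFunc ℂ) X := by
    rw [← mul_assoc, inv_mul_cancel₀ hσ, one_mul]
  rw [ecancel] at eqB
  simp only [rderiv_mul, rderiv_add, rderiv_X, rderiv_one, rderiv_zero, mul_one, mul_zero,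
    zero_add, add_zero, one_mul, zero_mul] at eqB
  have hqtσ : qt * σ = q * σ - 2 * p * rderiv σ := by
    linear_combination eqB - algebraMap (Polynomial ℂ) (RatFunc ℂ) X * eqA
  have hrtσ : rt * σ = r * σ - qt * rderiv σ - p * rderiv (rderiv σ) := by
    linear_combination eqA
  have hq2 : q * (2 * η) = rderiv p * η + 2 * algebraMap (Polynomial ℂ) (RatFunc ℂ) s * η
      - 4 * p * rderiv η := by
    rw [hq]; field_simp [hη]; ring
  constructor
  · simp only [rderiv_mul]
    have hqt3 : qt * (2 * (σ * η)) = rderiv p * σ * η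
        + 2 * algebraMap (Polynomial ℂ) (RatFunc ℂ) s * σ * η
        - 4 * p * (rderiv σ * η + σ * rderiv η) := by
      linear_combination (2 * η) * hqtσ + σ * hq2
    have hD1 : (2 * (σ * η) : RatFunc ℂ) ≠ 0 :=
      mul_ne_zero two_ne_zero (mul_ne_zero hσ hη)
    apply mul_right_cancel₀ hD1
    rw [hqt3]
    field_simp [hσ, hη]
    ring
  · obtain ⟨ν, hν, hsubst, hμν⟩ : ∃ ν : RatFunc ℂ, ν ≠ 0 ∧ σ⁻¹ * μ = ν ∧ μ = σ * ν :=
      ⟨σ⁻¹ * μ, mul_ne_zero (inv_ne_zero hσ) hμ, rfl, by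
        rw [← mul_assoc, mul_inv_cancel₀ hσ, one_mul]⟩
    rw [hsubst]
    rw [hμν] at hr
    simp only [rderiv_mul, rderiv_add] at hr ⊢
    have cancel1 : ∀ x y z : RatFunc ℂ, y ≠ 0 → x / y * (y * z) = x * z := by
      intro x y z hy; rw [div_mul_eq_mul_div, div_eq_iff hy]; ring
    have cancel2 : ∀ x y z : RatFunc ℂ, y ≠ 0 → (x / y) ^ 2 * (y * (y * z)) = x ^ 2 * z := by
      intro x y z hy; rw [div_pow, div_mul_eq_mul_div, div_eq_iff (pow_ne_zero 2 hy)]; ring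
    have hση : (σ * η : RatFunc ℂ) ≠ 0 := mul_ne_zero hσ hη
    have hσν : (σ * ν : RatFunc ℂ) ≠ 0 := mul_ne_zero hσ hν
    have hr2 : r * (2 * η * σ ^ 2 * ν ^ 2) =
        2 * p * rderiv (rderiv η) * σ ^ 2 * ν ^ 2
        + (rderiv p - 2 * algebraMap (Polynomial ℂ) (RatFunc ℂ) s) * rderiv η * σ ^ 2 * ν ^ 2
        + 4 * p * η * ((rderiv (rderiv σ) * ν + 2 * rderiv σ * rderiv ν
            + σ * rderiv (rderiv ν)) * σ * ν - (rderiv σ * ν + σ * rderiv ν) ^ 2)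
        + 2 * rderiv p * η * (rderiv σ * ν + σ * rderiv ν) * σ * ν := by
      rw [hr]
      linear_combination cancel1 (p * rderiv (rderiv η)) η (2 * σ ^ 2 * ν ^ 2) hη
        + (rderiv p / 2 - algebraMap (Polynomial ℂ) (RatFunc ℂ) s)
            * cancel1 (rderiv η) η (2 * σ ^ 2 * ν ^ 2) hη
        + (2 * p) * cancel1 (rderiv (rderiv σ) * ν + rderiv σ * rderiv ν
            + (rderiv σ * rderiv ν + σ * rderiv (rderiv ν))) (σ * ν) (2 * η * σ * ν) hσν
        - (2 * p) * cancel2 (rderiv σ * ν + σ * rderiv ν) (σ * ν) (2 * η) hσν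
        + rderiv p * cancel1 (rderiv σ * ν + σ * rderiv ν) (σ * ν) (2 * η * σ * ν) hσν
    have hrt3 : rt * (2 * η * σ ^ 2 * ν ^ 2) =
        (2 * p * rderiv (rderiv η) * σ ^ 2 * ν ^ 2
        + (rderiv p - 2 * algebraMap (Polynomial ℂ) (RatFunc ℂ) s) * rderiv η * σ ^ 2 * ν ^ 2
        + 4 * p * η * ((rderiv (rderiv σ) * ν + 2 * rderiv σ * rderiv ν
            + σ * rderiv (rderiv ν)) * σ * ν - (rderiv σ * ν + σ * rderiv ν) ^ 2)
        + 2 * rderiv p * η * (rderiv σ * ν + σ * rderiv ν) * σ * ν)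
        - ν ^ 2 * σ * rderiv σ * (rderiv p * η
            + 2 * algebraMap (Polynomial ℂ) (RatFunc ℂ) s * η - 4 * p * rderiv η)
        + 4 * ν ^ 2 * η * p * rderiv σ ^ 2 - 2 * σ * ν ^ 2 * η * p * rderiv (rderiv σ) := by
      linear_combination (2 * σ * ν ^ 2 * η) * hrtσ - (2 * ν ^ 2 * η * rderiv σ) * hqtσ
        - (ν ^ 2 * σ * rderiv σ) * hq2 + hr2
    have hD2 : (2 * η * σ ^ 2 * ν ^ 2 : RatFunc ℂ) ≠ 0 :=
      mul_ne_zero (mul_ne_zero (mul_ne_zero two_ne_zero hη) (pow_ne_zero 2 hσ))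
        (pow_ne_zero 2 hν)
    apply mul_right_cancel₀ hD2
    rw [hrt3]
    linear_combination
      - cancel1 (p * (rderiv (rderiv σ) * η + rderiv σ * rderiv η
          + (rderiv σ * rderiv η + σ * rderiv (rderiv η)))) (σ * η) (2 * σ * ν ^ 2) hση
      - (rderiv p / 2 - algebraMap (Polynomial ℂ) (RatFunc ℂ) s)
          * cancel1 (rderiv σ * η + σ * rderiv η) (σ * η) (2 * σ * ν ^ 2) hση
      - (2 * p) * cancel1 (rderiv (rderiv ν)) ν (2 * η * σ ^ 2 * ν) hν
      + (2 * p) * cancel2 (rderiv ν) ν (2 * η * σ ^ 2) hν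
      - rderiv p * cancel1 (rderiv ν) ν (2 * η * σ ^ 2 * ν) hν
end
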